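/- arXiv:1710.09853 — 5 statements merged into one kernel-verified Lean document; each statement's English description precedes it below -/
import Mathlib

section
/- Let n ≥ 1 and let E₁, E₂ be complex Hilbert spaces. Let X : ℓ²(ℕⁿ, E₁) → ℓ²(ℕⁿ, E₂) be a linear isometry satisfying X ∘ Sᵢ^{E₁} = Sᵢ^{E₂} ∘ X for every i = 1, …, n, where Sᵢ^{E} denotes the i-th coordinate shift on ℓ²(ℕⁿ, E). Then the Hilbert dimension of E₁ is at most the Hilbert dimension of E₂. -/
noncomputable section

open Filter Topology MeasureTheory ContinuousLinearMap

universe u v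

/-- An operator is a *shift* if it is an isometry whose adjoint powers tend to zero strongly. -/
def IsShiftOp {H : Type*} [NormedAddCommGroup H] [InnerProductSpace ℂ H] [CompleteSpace H]
    (V : H →L[ℂ] H) : Prop :=
  (∀ f, ‖V f‖ = ‖f‖) ∧
    ∀ f, Tendsto (fun m : ℕ => ‖((ContinuousLinearMap.adjoint V) ^ m) f‖) atTop (nhds 0)

/-- The unilateral shift on `ℓ²(ℕ, W)`: `(S f) 0 = 0`, `(S f) (m+1) = f m`. -/
def IsUnilateralShift {W : Type*} [NormedAddCommGroup W] [InnerProductSpace ℂ W]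
    (S : lp (fun _ : ℕ => W) 2 →L[ℂ] lp (fun _ : ℕ => W) 2) : Prop :=
  ∀ f : lp (fun _ : ℕ => W) 2, (S f) 0 = 0 ∧ ∀ m : ℕ, (S f) (m + 1) = f m

/-- The `i`-th coordinate shift on `ℓ²(ℕⁿ, E)`. -/
def IsCoordShift {n : ℕ} {E : Type*} [NormedAddCommGroup E] [InnerProductSpace ℂ E] (i : Fin n)
    (S : lp (fun _ : Fin n → ℕ => E) 2 →L[ℂ] lp (fun _ : Fin n → ℕ => E) 2) : Prop :=
  ∀ (f : lp (fun _ : Fin n → ℕ => E) 2) (k : Fin n → ℕ),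
    (S f) k = if 1 ≤ k i then f (Function.update k i (k i - 1)) else 0

/-- The model space `ℓ²(ℕ, ℓ²(ℕⁿ, E))`, the ℓ²-model of `H²_{H²_E(𝔻ⁿ)}(𝔻)`. -/
abbrev ModelSpace (n : ℕ) (E : Type u) [NormedAddCommGroup E] [InnerProductSpace ℂ E] :=
  lp (fun _ : ℕ => lp (fun _ : Fin n → ℕ => E) 2) 2

/-- `M_{κᵢ}` acts entrywise on `ℓ²(ℕ, ℓ²(ℕⁿ, E))` by the `i`-th coordinate shift. -/
def IsKappa {n : ℕ} {E : Type*} [NormedAddCommGroup E] [InnerProductSpace ℂ E] (i : Fin n)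
    (M : ModelSpace n E →L[ℂ] ModelSpace n E) : Prop :=
  ∀ (f : ModelSpace n E) (m : ℕ) (k : Fin n → ℕ),
    ((M f) m) k = if 1 ≤ k i then (f m) (Function.update k i (k i - 1)) else 0

/-- `P` is the orthogonal projection of `H` onto `W`. -/
def IsOrthProjOnto {H : Type*} [NormedAddCommGroup H] [InnerProductSpace ℂ H]
    (W : Submodule ℂ H) (P : H →L[ℂ] H) : Prop :=
  ∀ f : H, P f ∈ W ∧ f - P f ∈ Wᗮ

/-- The Hilbert dimension of `E` is at most that of `F`. -/
def HilbertDimLE (E : Type u) (F : Type v) [NormedAddCommGroup E] [InnerProductSpace ℂ E]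
    [NormedAddCommGroup F] [InnerProductSpace ℂ F] : Prop :=
  ∀ (ι₁ : Type u) (ι₂ : Type v), HilbertBasis ι₁ ℂ E → HilbertBasis ι₂ ℂ F →
    Cardinal.lift.{v} (Cardinal.mk ι₁) ≤ Cardinal.lift.{u} (Cardinal.mk ι₂)

/-- The Hilbert dimensions of `E` and `F` agree. -/
def HilbertDimEq (E : Type u) (F : Type v) [NormedAddCommGroup E] [InnerProductSpace ℂ E]
    [NormedAddCommGroup F] [InnerProductSpace ℂ F] : Prop :=
  ∀ (ι₁ : Type u) (ι₂ : Type v), HilbertBasis ι₁ ℂ E → HilbertBasis ι₂ ℂ F →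
    Cardinal.lift.{v} (Cardinal.mk ι₁) = Cardinal.lift.{u} (Cardinal.mk ι₂)

/-!
Let `(e_c)` be a Hilbert basis of `E₁` and `w (k, c) = X (δ_k ⊗ e_c)`. These vectors are
orthonormal, and since `X` intertwines the shifts, `w (k, c)` is the translate of `w (0, c)` by `k`.

If a Hilbert basis `(f_j)` of `E₂` is infinite, then the vectors `δ_m ⊗ f_j` form a Hilbert basis
of `ℓ²(ℕⁿ, E₂)` of the same cardinality. By Bessel's inequality each of them pairs nontrivially with
only countably many members of an orthonormal family, so the family `w (0, c)` is no larger.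

If `E₂` has finite dimension `d`, take `p` indices `c`. For a fixed `L`, each `w (0, c)` has mass
at least `r < 1` on the cube `m ≤ L`, so each of the `p (N+1)ⁿ` orthonormal vectors `w (k, c)`,
`k ≤ N`, has mass at least `r` on the cube `m ≤ N + L`. By Bessel's inequality these masses add up
to at most `d (N+L+1)ⁿ`, and letting `N → ∞` gives `p r ≤ d`.
-/

open scoped InnerProductSpace
open Finset

theorem multiIndex_induction {ι : Type*} [Finite ι] [DecidableEq ι] {P : (ι → ℕ) → Prop}
    (zero : P 0) (step : ∀ k i, P k → P (k + Pi.single i 1)) (k : ι → ℕ) : P k := by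
  suffices ∀ g, P g → P (g + k) by simpa using this 0 zero
  induction k using Pi.single_induction with
  | zero => simp
  | add f f' hf hf' => exact fun g hg => add_assoc g f f' ▸ hf' _ (hf g hg)
  | single i c =>
    induction c with
    | zero => simp
    | succ c ih =>
      intro g hg
      rw [Pi.single_add, ← add_assoc]
      exact step _ i (ih g hg)

section CoordShift

variable {n : ℕ} {E : Type*} [NormedAddCommGroup E] [InnerProductSpace ℂ E] {i : Fin n}
  {S : lp (fun _ : Fin n → ℕ => E) 2 →L[ℂ] lp (fun _ : Fin n → ℕ => E) 2}

theorem IsCoordShift.apply_add_single (hS : IsCoordShift i S) (f : lp (fun _ : Fin n → ℕ => E) 2)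
    (k : Fin n → ℕ) : S f (k + Pi.single i 1) = f k := by
  rw [hS, if_pos (by simp)]
  refine congrArg f (funext fun j => ?_)
  rcases eq_or_ne j i with rfl | hj <;> simp [*]

theorem IsCoordShift.apply_of_eq_zero (hS : IsCoordShift i S) (f : lp (fun _ : Fin n → ℕ => E) 2)
    {k : Fin n → ℕ} (hk : k i = 0) : S f k = 0 := by
  rw [hS, if_neg (by omega)]

theorem IsCoordShift.map_single (hS : IsCoordShift i S) (k : Fin n → ℕ) (a : E) :
    S (lp.single 2 k a) = lp.single 2 (k + Pi.single i 1) a := by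
  ext m : 2
  by_cases hm : m i = 0
  · rw [hS.apply_of_eq_zero _ hm, lp.single_apply_ne]
    rintro rfl
    simp at hm
  · obtain ⟨m, rfl⟩ : ∃ m', m = m' + Pi.single i 1 :=
      ⟨m - Pi.single i 1, by ext j; rcases eq_or_ne j i with rfl | hj <;> simp [*]; omega⟩
    simp only [hS.apply_add_single, lp.single_apply, Pi.single_apply, add_left_inj]

end CoordShift

theorem intertwiner_single_apply_add {n : ℕ} {E₁ E₂ : Type*}
    [NormedAddCommGroup E₁] [InnerProductSpace ℂ E₁]
    [NormedAddCommGroup E₂] [InnerProductSpace ℂ E₂]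
    {S₁ : Fin n → (lp (fun _ : Fin n → ℕ => E₁) 2 →L[ℂ] lp (fun _ : Fin n → ℕ => E₁) 2)}
    {S₂ : Fin n → (lp (fun _ : Fin n → ℕ => E₂) 2 →L[ℂ] lp (fun _ : Fin n → ℕ => E₂) 2)}
    (hS₁ : ∀ i, IsCoordShift i (S₁ i)) (hS₂ : ∀ i, IsCoordShift i (S₂ i))
    {X : lp (fun _ : Fin n → ℕ => E₁) 2 → lp (fun _ : Fin n → ℕ => E₂) 2}
    (hX : ∀ i f, X (S₁ i f) = S₂ i (X f)) (k m : Fin n → ℕ) (e : E₁) :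
    X (lp.single 2 k e) (k + m) = X (lp.single 2 0 e) m := by
  induction k using multiIndex_induction generalizing m with
  | zero => rw [zero_add]
  | step k i ih => rw [← (hS₁ i).map_single, hX, add_right_comm, (hS₂ i).apply_add_single, ih]

theorem Orthonormal.lpSingle {𝕜 α ι E : Type*} [RCLike 𝕜] [NormedAddCommGroup E]
    [InnerProductSpace 𝕜 E] [DecidableEq α] {v : ι → E} (hv : Orthonormal 𝕜 v) :
    Orthonormal 𝕜 (fun q : α × ι => (lp.single 2 q.1 (v q.2) : lp (fun _ : α => E) 2)) := by
  classical
  rw [orthonormal_iff_ite] at hv ⊢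
  rintro ⟨k, a⟩ ⟨l, b⟩
  rw [lp.inner_single_left, lp.single_apply, Pi.single_apply]
  rcases eq_or_ne l k with rfl | hlk
  · simp [hv]
  · simp [hlk.symm]

section Cardinality

variable {𝕜 H : Type*} [RCLike 𝕜] [NormedAddCommGroup H] [InnerProductSpace 𝕜 H]

theorem lp.eq_zero_of_forall_inner_single_eq_zero {α ι E : Type*} [NormedAddCommGroup E]
    [InnerProductSpace 𝕜 E] [DecidableEq α] (b : HilbertBasis ι 𝕜 E)
    {x : lp (fun _ : α => E) 2} (hx : ∀ m j, ⟪x, lp.single 2 m (b j)⟫_𝕜 = 0) : x = 0 := by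
  ext m : 2
  refine b.repr.injective (lp.ext (funext fun j => ?_))
  simpa [HilbertBasis.repr_apply_apply, lp.inner_single_right, inner_eq_zero_symm] using hx m j

theorem Orthonormal.lift_mk_le_of_total.{w, w'} {ι' : Type w} {ι : Type w'} [Infinite ι]
    {v : ι' → H} (hv : Orthonormal 𝕜 v) {t : ι → H} (ht : ∀ x, (∀ j, ⟪x, t j⟫_𝕜 = 0) → x = 0) :
    Cardinal.lift.{w'} (Cardinal.mk ι') ≤ Cardinal.lift.{w} (Cardinal.mk ι) := by
  set A : ι → Set ι' := fun j => Function.support fun a => ‖⟪v a, t j⟫_𝕜‖ ^ 2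
  have hcover : (⋃ j, A j) = Set.univ := by
    refine Set.eq_univ_of_forall fun a => Set.mem_iUnion.2 ?_
    by_contra! h
    exact hv.ne_zero a (ht _ fun j => by simpa [A] using h j)
  have hA : ∀ j, Cardinal.lift.{w'} (Cardinal.mk (A j)) ≤ Cardinal.aleph0 := fun j =>
    Cardinal.lift_le_aleph0.2 (hv.inner_products_summable (t j)).countable_support.le_aleph0
  calc Cardinal.lift.{w'} (Cardinal.mk ι')
      = Cardinal.lift.{w'} (Cardinal.mk (⋃ j, A j)) := by rw [hcover, Cardinal.mk_univ]
    _ ≤ Cardinal.lift.{w} (Cardinal.mk ι) * ⨆ j, Cardinal.lift.{w'} (Cardinal.mk (A j)) :=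
      Cardinal.mk_iUnion_le_lift A
    _ ≤ Cardinal.lift.{w} (Cardinal.mk ι) * Cardinal.aleph0 := by gcongr; exact ciSup_le' hA
    _ = Cardinal.lift.{w} (Cardinal.mk ι) := Cardinal.mul_aleph0_eq (by simp)

end Cardinality

section Counting

theorem le_of_forall_mul_pow_le {a b : ℝ} {n L : ℕ}
    (h : ∀ N : ℕ, a * (N + 1) ^ n ≤ b * (N + L + 1) ^ n) : a ≤ b := by
  have hratio : Tendsto (fun N : ℕ => b * (((L + 1 : ℝ) + 1 * N) / (1 + 1 * N)) ^ n) atTop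
      (𝓝 (b * (1 / 1) ^ n)) :=
    ((tendsto_add_mul_div_add_mul_atTop_nhds _ _ _ one_ne_zero).pow n).const_mul b
  simp only [div_one, one_pow, mul_one, one_mul] at hratio
  refine ge_of_tendsto' hratio fun N => ?_
  rw [div_pow, mul_div_assoc', le_div_iff₀ (by positivity)]
  simpa only [add_comm, add_left_comm, add_assoc] using h N

theorem Pi.card_Iic_natCast (n N : ℕ) : (Iic (N : Fin n → ℕ)).card = (N + 1) ^ n := by
  simp [Pi.card_Iic]

variable {𝕜 E : Type*} [RCLike 𝕜] [NormedAddCommGroup E] [InnerProductSpace 𝕜 E]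

theorem tendsto_sum_Iic_norm_sq {n : ℕ} (f : lp (fun _ : Fin n → ℕ => E) 2) :
    Tendsto (fun L : ℕ => ∑ m ∈ Iic (L : Fin n → ℕ), ‖f m‖ ^ 2) atTop (𝓝 (‖f‖ ^ 2)) := by
  have hf : HasSum (fun m => ‖f m‖ ^ 2) (‖f‖ ^ 2) := by
    simpa using lp.hasSum_norm (p := 2) (by norm_num) f
  refine hf.comp (tendsto_atTop_finset_of_monotone (fun L L' h => ?_) fun m => ?_)
  · exact Iic_subset_Iic.2 fun _ => h
  · exact ⟨univ.sup m, mem_Iic.2 fun j => le_sup (f := m) (mem_univ j)⟩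

theorem Orthonormal.sum_sum_norm_sq_apply_le {ι κ α : Type*} [Fintype ι] [DecidableEq α]
    (b : OrthonormalBasis ι 𝕜 E) {w : κ → lp (fun _ : α => E) 2} (hw : Orthonormal 𝕜 w)
    (K : Finset κ) (s : Finset α) :
    ∑ q ∈ K, ∑ m ∈ s, ‖w q m‖ ^ 2 ≤ Fintype.card ι * s.card := by
  calc ∑ q ∈ K, ∑ m ∈ s, ‖w q m‖ ^ 2
      = ∑ m ∈ s, ∑ j, ∑ q ∈ K, ‖⟪w q, lp.single 2 m (b j)⟫_𝕜‖ ^ 2 := by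
        simp_rw [lp.inner_single_right, norm_inner_symm (w _ _), ← b.sum_sq_norm_inner_right]
        rw [sum_comm]
        exact sum_congr rfl fun m _ => sum_comm
    _ ≤ ∑ m ∈ s, ∑ j : ι, (1 : ℝ) := by
        gcongr with m _ j
        simpa [lp.norm_single, b.orthonormal.1 j] using
          hw.sum_inner_products_le (lp.single 2 m (b j) : lp (fun _ : α => E) 2) (s := K)
    _ = Fintype.card ι * s.card := by simp [mul_comm]

theorem mk_le_of_orthonormal_translates {ι κ : Type*} {n : ℕ} [Fintype ι]
    (b : OrthonormalBasis ι 𝕜 E) {w : (Fin n → ℕ) × κ → lp (fun _ : Fin n → ℕ => E) 2}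
    (hw : Orthonormal 𝕜 w) (hw_translate : ∀ k m c, w (k, c) (k + m) = w (0, c) m) :
    Cardinal.mk κ ≤ Fintype.card ι := by
  refine Cardinal.card_le_of fun s => ?_
  suffices h : ∀ r < 1, (s.card : ℝ) * r ≤ Fintype.card ι by
    have hlim : Tendsto (fun r : ℝ => s.card * r) (𝓝[<] 1) (𝓝 (s.card * 1)) :=
      ((continuous_const_mul _).tendsto 1).mono_left nhdsWithin_le_nhds
    simpa using le_of_tendsto hlim (eventually_nhdsWithin_of_forall h)
  intro r hr
  obtain ⟨L, hL⟩ : ∃ L : ℕ, ∀ c ∈ s, r ≤ ∑ m ∈ Iic (L : Fin n → ℕ), ‖w (0, c) m‖ ^ 2 :=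
    (eventually_all_finset s).2 (fun c _ => (tendsto_sum_Iic_norm_sq (w (0, c))).eventually_const_le
      (by simpa [hw.1 (0, c)] using hr)) |>.exists
  refine le_of_forall_mul_pow_le (L := L) (n := n) fun N => ?_
  have hmass : ∀ q ∈ Iic (N : Fin n → ℕ) ×ˢ s,
      r ≤ ∑ m ∈ Iic ((N + L : ℕ) : Fin n → ℕ), ‖w q m‖ ^ 2 := by
    rintro ⟨k, c⟩ hq
    rw [mem_product, mem_Iic] at hq
    calc r ≤ ∑ m ∈ Iic (L : Fin n → ℕ), ‖w (k, c) (k + m)‖ ^ 2 := by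
          simpa [hw_translate] using hL c hq.2
      _ = ∑ m ∈ (Iic (L : Fin n → ℕ)).map (addLeftEmbedding k), ‖w (k, c) m‖ ^ 2 := by simp
      _ ≤ _ := sum_le_sum_of_subset_of_nonneg (fun m hm => by
          obtain ⟨m', hm', rfl⟩ := mem_map.1 hm
          simpa using add_le_add hq.1 (mem_Iic.1 hm')) fun _ _ _ => by positivity
  calc (s.card * r : ℝ) * (N + 1) ^ n = ∑ q ∈ Iic (N : Fin n → ℕ) ×ˢ s, r := by
        simp [card_product, Pi.card_Iic_natCast]; ring
    _ ≤ ∑ q ∈ Iic (N : Fin n → ℕ) ×ˢ s, ∑ m ∈ Iic ((N + L : ℕ) : Fin n → ℕ), ‖w q m‖ ^ 2 :=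
        sum_le_sum hmass
    _ ≤ Fintype.card ι * (Iic ((N + L : ℕ) : Fin n → ℕ)).card := hw.sum_sum_norm_sq_apply_le b _ _
    _ = Fintype.card ι * (N + L + 1) ^ n := by rw [Pi.card_Iic_natCast]; push_cast; ring

end Counting

theorem statement1_general (n : ℕ)
    (E₁ : Type u) [NormedAddCommGroup E₁] [InnerProductSpace ℂ E₁]
    (E₂ : Type v) [NormedAddCommGroup E₂] [InnerProductSpace ℂ E₂]
    (S₁ : Fin n → (lp (fun _ : Fin n → ℕ => E₁) 2 →L[ℂ] lp (fun _ : Fin n → ℕ => E₁) 2))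
    (S₂ : Fin n → (lp (fun _ : Fin n → ℕ => E₂) 2 →L[ℂ] lp (fun _ : Fin n → ℕ => E₂) 2))
    (hS₁ : ∀ i, IsCoordShift i (S₁ i)) (hS₂ : ∀ i, IsCoordShift i (S₂ i))
    (X : lp (fun _ : Fin n → ℕ => E₁) 2 →ₗᵢ[ℂ] lp (fun _ : Fin n → ℕ => E₂) 2)
    (hX : ∀ (i : Fin n) f, X (S₁ i f) = S₂ i (X f)) :
    HilbertDimLE E₁ E₂ := by
  intro ι₁ ι₂ b₁ b₂
  have hu : Orthonormal ℂ (fun q : (Fin n → ℕ) × ι₁ => X (lp.single 2 q.1 (b₁ q.2))) :=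
    b₁.orthonormal.lpSingle.comp_linearIsometry X
  rcases finite_or_infinite ι₂ with _ | _
  · cases nonempty_fintype ι₂
    rw [Cardinal.mk_fintype ι₂, Cardinal.lift_natCast, Cardinal.lift_le_nat_iff]
    exact mk_le_of_orthonormal_translates b₂.toOrthonormalBasis hu
      fun k m c => intertwiner_single_apply_add hS₁ hS₂ hX k m (b₁ c)
  · have hu₀ := hu.comp (fun a => ((0 : Fin n → ℕ), a)) fun _ _ h => congrArg Prod.snd h
    calc Cardinal.lift.{v} (Cardinal.mk ι₁)
        ≤ Cardinal.lift.{u} (Cardinal.mk ((Fin n → ℕ) × ι₂)) :=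
          hu₀.lift_mk_le_of_total (t := fun q => lp.single 2 q.1 (b₂ q.2)) fun x hx =>
            lp.eq_zero_of_forall_inner_single_eq_zero b₂ fun m j => hx (m, j)
      _ ≤ Cardinal.lift.{u} (Cardinal.mk ι₂) := by
          rw [Cardinal.lift_le, Cardinal.mk_prod, Cardinal.lift_uzero]
          have hℵ₀ := Cardinal.aleph0_le_mk ι₂
          exact Cardinal.mul_le_of_le hℵ₀
            ((Cardinal.lift_le_aleph0.2 Cardinal.mk_le_aleph0).trans hℵ₀) le_rfl

/-- If a linear isometry `X : ℓ²(ℕⁿ, E₁) → ℓ²(ℕⁿ, E₂)` intertwines all the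
coordinate shifts, then the Hilbert dimension of `E₁` is at most that of `E₂`. -/
theorem statement1 (n : ℕ) (hn : 1 ≤ n)
    (E₁ : Type u) [NormedAddCommGroup E₁] [InnerProductSpace ℂ E₁] [CompleteSpace E₁]
    (E₂ : Type v) [NormedAddCommGroup E₂] [InnerProductSpace ℂ E₂] [CompleteSpace E₂]
    (S₁ : Fin n → (lp (fun _ : Fin n → ℕ => E₁) 2 →L[ℂ] lp (fun _ : Fin n → ℕ => E₁) 2))
    (S₂ : Fin n → (lp (fun _ : Fin n → ℕ => E₂) 2 →L[ℂ] lp (fun _ : Fin n → ℕ => E₂) 2))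
    (hS₁ : ∀ i, IsCoordShift i (S₁ i)) (hS₂ : ∀ i, IsCoordShift i (S₂ i))
    (X : lp (fun _ : Fin n → ℕ => E₁) 2 →ₗᵢ[ℂ] lp (fun _ : Fin n → ℕ => E₂) 2)
    (hX : ∀ (i : Fin n) f, X (S₁ i f) = S₂ i (X f)) :
    HilbertDimLE E₁ E₂ :=
  statement1_general n E₁ E₂ S₁ S₂ hS₁ hS₂ X hX
end
end

section
/- Let V be a shift on a complex Hilbert space H, let W = ker V* with orthogonal projection P_W, and define Γ : H → ℓ²(ℕ, W) by (Γ f)(m) = P_W V^{*m} f for m ∈ ℕ. Then: (i) Γ is a well-defined unitary operator satisfying Γ V = S_W Γ, where S_W is the unilateral shift on ℓ²(ℕ, W); (ii) a bounded operator C on H satisfies C V = V C if and only if the operator M = Γ C Γ* on ℓ²(ℕ, W) satisfies M S_W = S_W M; and in that case, for every η ∈ W and every m ∈ ℕ, (M(ι η))(m) = P_W V^{*m} C η, where ι η ∈ ℓ²(ℕ, W) is the sequence with η in position 0 and 0 elsewhere. -/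
noncomputable section

open Filter Topology MeasureTheory ContinuousLinearMap

universe u v

/-!
Since `V` is an isometry, `V*` is a left inverse of `V` and the range of `V` is orthogonal to
`W = ker V*`, so every `x` splits orthogonally as `x = P x + V V* x` and
`‖x‖² = ‖P x‖² + ‖V* x‖²`. Iterating telescopes to `∑_{m<N} ‖P V*ᵐ x‖² = ‖x‖² - ‖V*ᴺ x‖²`,
which tends to `‖x‖²` because `V` is a shift: `Γ` is an isometry. It sends `Vᵏ η` (`η ∈ W`) to
the sequence with `η` in position `k`, so its closed range contains every finitely supported
sequence and `Γ` is onto. As `Γ V = S_W Γ`, the commutant statement is conjugation by `Γ`.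
-/

theorem lp.norm_eq_of_hasSum_norm_sq {ι : Type*} {E : ι → Type*} [∀ i, NormedAddCommGroup (E i)]
    (f : lp E 2) {r : ℝ} (hr : 0 ≤ r) (h : HasSum (fun i ↦ ‖f i‖ ^ 2) (r ^ 2)) : ‖f‖ = r := by
  have hf := lp.hasSum_norm (p := 2) (by norm_num) f
  simp only [ENNReal.toReal_ofNat, Real.rpow_two] at hf
  exact (pow_left_inj₀ (norm_nonneg f) hr two_ne_zero).mp (hf.unique h)

theorem Equiv.commute_conj_iff {α β : Type*} (e : α ≃ β) {V : α → α} {S : β → β}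
    (h : Function.Semiconj e V S) (C : α → α) :
    Function.Commute (e.conj C) S ↔ Function.Commute C V := by
  constructor
  · intro hC x
    exact e.injective (by simpa [← h.eq] using hC (e x))
  · intro hC y
    obtain ⟨x, rfl⟩ := e.surjective y
    simp [← h.eq, hC x]

namespace IsOrthProjOnto

variable {H : Type*} [NormedAddCommGroup H] [InnerProductSpace ℂ H] {W : Submodule ℂ H}
  {P : H →L[ℂ] H}

theorem apply_eq_self_of_mem (hP : IsOrthProjOnto W P) {x : H} (hx : x ∈ W) : P x = x :=
  (sub_eq_zero.mp <| Submodule.disjoint_def.mp W.orthogonal_disjoint _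
    (W.sub_mem hx (hP x).1) (hP x).2).symm

theorem apply_eq_zero_of_mem_orthogonal (hP : IsOrthProjOnto W P) {x : H} (hx : x ∈ Wᗮ) :
    P x = 0 := by
  refine Submodule.disjoint_def.mp W.orthogonal_disjoint _ (hP x).1 ?_
  simpa using Wᗮ.sub_mem hx (hP x).2

theorem norm_sq_eq_add (hP : IsOrthProjOnto W P) (x : H) :
    ‖x‖ ^ 2 = ‖P x‖ ^ 2 + ‖x - P x‖ ^ 2 := by
  have h := norm_add_sq_eq_norm_sq_add_norm_sq_of_inner_eq_zero (P x) (x - P x)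
    (Submodule.inner_right_of_mem_orthogonal (hP x).1 (hP x).2)
  simpa [sq] using h

end IsOrthProjOnto

section Isometry

variable {H : Type*} [NormedAddCommGroup H] [InnerProductSpace ℂ H] [CompleteSpace H]
  {V : H →L[ℂ] H}

theorem adjoint_apply_apply_of_isometry (hV : ∀ x, ‖V x‖ = ‖x‖) (x : H) :
    adjoint V (V x) = x := by
  simpa using congrArg (· x) ((norm_map_iff_adjoint_comp_self V).mp hV)

theorem adjoint_pow_apply_pow_of_isometry (hV : ∀ x, ‖V x‖ = ‖x‖) (m : ℕ) (x : H) :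
    (adjoint V ^ m) ((V ^ m) x) = x := by
  induction m with
  | zero => simp
  | succ m ih =>
    rw [pow_succ, pow_succ', mul_apply_eq_comp, mul_apply_eq_comp,
      adjoint_apply_apply_of_isometry hV, ih]

theorem apply_mem_orthogonal_ker_adjoint (x : H) :
    V x ∈ (LinearMap.ker (adjoint V : H →ₗ[ℂ] H))ᗮ := by
  rw [Submodule.mem_orthogonal]
  intro u hu
  rw [← adjoint_inner_left, show adjoint V u = 0 from hu, inner_zero_left]

end Isometry

section Wold

variable {H : Type*} [NormedAddCommGroup H] [InnerProductSpace ℂ H] [CompleteSpace H]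
  {V : H →L[ℂ] H} {W : Submodule ℂ H} {P : H →L[ℂ] H}

theorem sub_apply_eq_apply_adjoint_apply (hV : ∀ x, ‖V x‖ = ‖x‖)
    (hW : W = LinearMap.ker (adjoint V : H →ₗ[ℂ] H)) (hP : IsOrthProjOnto W P) (x : H) :
    x - P x = V (adjoint V x) := by
  subst hW
  have hker : x - P x - V (adjoint V x) ∈ LinearMap.ker (adjoint V : H →ₗ[ℂ] H) := by
    have hPx : adjoint V (P x) = 0 := (hP x).1
    simp [LinearMap.mem_ker, hPx, adjoint_apply_apply_of_isometry hV]
  have hperp : x - P x - V (adjoint V x) ∈ (LinearMap.ker (adjoint V : H →ₗ[ℂ] H))ᗮ :=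
    Submodule.sub_mem _ (hP x).2 (apply_mem_orthogonal_ker_adjoint _)
  exact sub_eq_zero.mp (Submodule.disjoint_def.mp (Submodule.orthogonal_disjoint _) _ hker hperp)

theorem norm_sq_eq_norm_sq_proj_add_norm_sq_adjoint (hV : ∀ x, ‖V x‖ = ‖x‖)
    (hW : W = LinearMap.ker (adjoint V : H →ₗ[ℂ] H)) (hP : IsOrthProjOnto W P) (x : H) :
    ‖x‖ ^ 2 = ‖P x‖ ^ 2 + ‖adjoint V x‖ ^ 2 := by
  rw [hP.norm_sq_eq_add, sub_apply_eq_apply_adjoint_apply hV hW hP, hV]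

theorem sum_range_norm_sq_proj_adjoint_pow (hV : ∀ x, ‖V x‖ = ‖x‖)
    (hW : W = LinearMap.ker (adjoint V : H →ₗ[ℂ] H)) (hP : IsOrthProjOnto W P) (x : H) (N : ℕ) :
    ∑ m ∈ Finset.range N, ‖P ((adjoint V ^ m) x)‖ ^ 2 = ‖x‖ ^ 2 - ‖(adjoint V ^ N) x‖ ^ 2 := by
  induction N with
  | zero => simp
  | succ N ih =>
    rw [Finset.sum_range_succ, ih, pow_succ' (adjoint V), mul_apply_eq_comp,
      norm_sq_eq_norm_sq_proj_add_norm_sq_adjoint hV hW hP ((adjoint V ^ N) x)]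
    ring

theorem hasSum_norm_sq_proj_adjoint_pow (hV : IsShiftOp V)
    (hW : W = LinearMap.ker (adjoint V : H →ₗ[ℂ] H)) (hP : IsOrthProjOnto W P) (x : H) :
    HasSum (fun m ↦ ‖P ((adjoint V ^ m) x)‖ ^ 2) (‖x‖ ^ 2) := by
  rw [hasSum_iff_tendsto_nat_of_nonneg (fun _ ↦ sq_nonneg _),
    funext (sum_range_norm_sq_proj_adjoint_pow hV.1 hW hP x)]
  simpa using tendsto_const_nhds.sub ((hV.2 x).pow 2)

theorem proj_adjoint_pow_pow_of_mem (hV : ∀ x, ‖V x‖ = ‖x‖)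
    (hW : W = LinearMap.ker (adjoint V : H →ₗ[ℂ] H)) (hP : IsOrthProjOnto W P) {η : H}
    (hη : η ∈ W) (m k : ℕ) :
    P ((adjoint V ^ m) ((V ^ k) η)) = if m = k then η else 0 := by
  obtain h | rfl | h := lt_trichotomy m k
  · obtain ⟨j, rfl⟩ := Nat.exists_eq_add_of_lt h
    rw [if_neg h.ne, add_assoc, pow_add, mul_apply_eq_comp, adjoint_pow_apply_pow_of_isometry hV,
      pow_succ', mul_apply_eq_comp]
    exact hP.apply_eq_zero_of_mem_orthogonal (hW ▸ apply_mem_orthogonal_ker_adjoint _)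
  · rw [if_pos rfl, adjoint_pow_apply_pow_of_isometry hV, hP.apply_eq_self_of_mem hη]
  · obtain ⟨j, rfl⟩ := Nat.exists_eq_add_of_lt h
    have hη' : adjoint V η = 0 := by subst hW; exact hη
    rw [if_neg h.ne', add_assoc, add_comm, pow_add, mul_apply_eq_comp,
      adjoint_pow_apply_pow_of_isometry hV, pow_succ, mul_apply_eq_comp, hη', map_zero, map_zero]

end Wold

section WoldMap

variable {H : Type*} [NormedAddCommGroup H] [InnerProductSpace ℂ H] [CompleteSpace H]
  {V : H →L[ℂ] H} {W : Submodule ℂ H} {P : H →L[ℂ] H}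

def woldMap (hV : IsShiftOp V) (hW : W = LinearMap.ker (adjoint V : H →ₗ[ℂ] H))
    (hP : IsOrthProjOnto W P) : H →ₗᵢ[ℂ] lp (fun _ : ℕ ↦ W) 2 :=
  let Γ : H →ₗ[ℂ] lp (fun _ : ℕ ↦ W) 2 :=
    { toFun x := ⟨fun m ↦ ⟨P ((adjoint V ^ m) x), (hP _).1⟩,
        memℓp_gen (by simpa using (hasSum_norm_sq_proj_adjoint_pow hV hW hP x).summable)⟩
      map_add' x y := by
        ext m
        exact (congrArg P (map_add _ x y)).trans (map_add P _ _)
      map_smul' c x := by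
        ext m
        exact (congrArg P (map_smul _ c x)).trans (map_smul P c _) }
  { Γ with
    norm_map' x := lp.norm_eq_of_hasSum_norm_sq (Γ x) (norm_nonneg x)
      (by simpa [Γ] using hasSum_norm_sq_proj_adjoint_pow hV hW hP x) }

variable (hV : IsShiftOp V) (hW : W = LinearMap.ker (adjoint V : H →ₗ[ℂ] H))
  (hP : IsOrthProjOnto W P)

theorem woldMap_apply_coe (x : H) (m : ℕ) :
    ((woldMap hV hW hP x m : W) : H) = P ((adjoint V ^ m) x) :=
  rfl

theorem woldMap_pow_apply (η : W) (k : ℕ) :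
    woldMap hV hW hP ((V ^ k) η) = lp.single 2 k η := by
  ext m
  rw [woldMap_apply_coe, proj_adjoint_pow_pow_of_mem hV.1 hW hP η.2, lp.single_apply,
    Pi.single_apply]
  split_ifs <;> rfl

theorem woldMap_apply_apply {S : lp (fun _ : ℕ ↦ W) 2 →L[ℂ] lp (fun _ : ℕ ↦ W) 2}
    (hS : IsUnilateralShift S) (x : H) : woldMap hV hW hP (V x) = S (woldMap hV hW hP x) := by
  ext (_ | m)
  · rw [(hS _).1, woldMap_apply_coe, pow_zero, one_apply_eq_self]
    exact hP.apply_eq_zero_of_mem_orthogonal (hW ▸ apply_mem_orthogonal_ker_adjoint x)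
  · rw [(hS _).2 m, woldMap_apply_coe, woldMap_apply_coe, pow_succ, mul_apply_eq_comp,
      adjoint_apply_apply_of_isometry hV.1]

theorem woldMap_surjective : Function.Surjective (woldMap hV hW hP) := by
  intro g
  have hclosed := (woldMap hV hW hP).isometry.isClosedEmbedding.isClosed_range
  refine hclosed.mem_of_tendsto (lp.hasSum_single (by norm_num) g).tendsto_sum_nat
    (Eventually.of_forall fun n ↦ ⟨∑ k ∈ Finset.range n, (V ^ k) (g k), ?_⟩)
  simp only [map_sum, woldMap_pow_apply]

def woldEquiv : H ≃ₗᵢ[ℂ] lp (fun _ : ℕ ↦ W) 2 :=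
  LinearIsometryEquiv.ofSurjective _ (woldMap_surjective hV hW hP)

theorem woldEquiv_symm_single_zero (η : W) :
    (woldEquiv hV hW hP).symm (lp.single 2 0 η) = η := by
  rw [LinearIsometryEquiv.symm_apply_eq, ← woldMap_pow_apply hV hW hP η 0, pow_zero,
    one_apply_eq_self]
  rfl

end WoldMap

/-- The Wold–von Neumann decomposition `Γ : H → ℓ²(ℕ, W)`, `(Γ f)(m) = P_W V*ᵐ f`,
of a shift `V` is a well-defined unitary with `Γ V = S_W Γ`; a bounded operator `C` commutes with
`V` iff `M = Γ C Γ*` commutes with the unilateral shift `S_W`, and in that case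
`(M (ι η))(m) = P_W V*ᵐ C η` for all `η ∈ W`, `m ∈ ℕ`. -/
theorem statement3 {H : Type u} [NormedAddCommGroup H] [InnerProductSpace ℂ H] [CompleteSpace H]
    (V : H →L[ℂ] H) (hV : IsShiftOp V)
    (W : Submodule ℂ H) (hW : W = LinearMap.ker (ContinuousLinearMap.adjoint V : H →ₗ[ℂ] H))
    (P : H →L[ℂ] H) (hP : IsOrthProjOnto W P)
    (SW : lp (fun _ : ℕ => ↥W) 2 →L[ℂ] lp (fun _ : ℕ => ↥W) 2)
    (hSW : IsUnilateralShift SW) :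
    ∃ Γ : H ≃ₗᵢ[ℂ] lp (fun _ : ℕ => ↥W) 2,
      (∀ (f : H) (m : ℕ), ((Γ f) m : H) = P (((ContinuousLinearMap.adjoint V) ^ m) f)) ∧
      (∀ f, Γ (V f) = SW (Γ f)) ∧
      ∀ C : H →L[ℂ] H,
        ((∀ f, C (V f) = V (C f)) ↔
          ∀ g, Γ (C (Γ.symm (SW g))) = SW (Γ (C (Γ.symm g)))) ∧
        ((∀ f, C (V f) = V (C f)) →
          ∀ (η : ↥W) (m : ℕ),
            ((Γ (C (Γ.symm (lp.single 2 0 η)))) m : H) =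
              P (((ContinuousLinearMap.adjoint V) ^ m) (C (η : H)))) := by
  have hΓV := woldMap_apply_apply hV hW hP hSW
  refine ⟨woldEquiv hV hW hP, woldMap_apply_coe hV hW hP, hΓV, fun C ↦ ⟨?_, fun _ η m ↦ ?_⟩⟩
  · exact ((woldEquiv hV hW hP).toEquiv.commute_conj_iff hΓV C).symm
  · rw [woldEquiv_symm_single_zero]
    exact woldMap_apply_coe hV hW hP (C η) m
end
end

section
/- Let (V, V₁, …, Vₙ) be an (n+1)-tuple of doubly commuting shifts on a complex Hilbert space H, and let D = ker V* ∩ ker V₁* ∩ ⋯ ∩ ker Vₙ* be the joint wandering subspace. Then, writing U₁ = V and U_{i+1} = Vᵢ for i = 1, …, n, the subspaces U^{𝐤} D = U₁^{k₁} ⋯ U_{n+1}^{k_{n+1}} D (𝐤 ∈ ℕ^{n+1}) are pairwise orthogonal with closed linear span H, and the map Γ : H → ℓ²(ℕ^{n+1}, D) determined by Γ(U^{𝐤} η) = e_{𝐤} ⊗ η for 𝐤 ∈ ℕ^{n+1} and η ∈ D is a well-defined unitary satisfying Γ Uⱼ = Sⱼ Γ for every j = 1, …, n+1, where S₁, …,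 S_{n+1} are the coordinate shifts on ℓ²(ℕ^{n+1}, D). Consequently, (V, V₁, …, Vₙ) is unitarily equivalent to (M_z, M_{κ₁}, …, M_{κₙ}) on ℓ²(ℕ, ℓ²(ℕⁿ, E)) for any Hilbert space E whose Hilbert dimension equals that of D. -/
noncomputable section

open Filter Topology MeasureTheory ContinuousLinearMap

universe u v

/-- The product `U^𝐤 = U₁^{k₁} ⋯ U_m^{k_m}` of powers of a tuple of operators. -/
def prodPow {H : Type*} [NormedAddCommGroup H] [InnerProductSpace ℂ H] {m : ℕ}
    (U : Fin m → (H →L[ℂ] H)) (k : Fin m → ℕ) : H →L[ℂ] H :=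
  (List.ofFn fun j => (U j) ^ (k j)).prod

/-!
Doubly commuting isometries let `Uⱼ*` pass through `U^𝐤` except in the `j`-th slot, so
`U^𝐤 D ⊥ U^𝐥 D` whenever `𝐤 ≠ 𝐥`: in a coordinate where `𝐤` is larger, the surplus power of
`Uⱼ` meets `Uⱼ* D = 0`. Density is the multivariable Wold decomposition. If `f ⊥ U^𝐤 D` for all
`𝐤`, put `Q = ∏ⱼ (1 - Uⱼ Uⱼ*)`; then `Q U^{𝐤*} f` lies in `D` and is orthogonal to `D`, so it
vanishes for every `𝐤`. Removing the factors of `Q` one at a time, the one-variable argument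
(`f = Vᵃ V*ᵃ f` forces `‖V*ᵃ f‖ = ‖f‖`, impossible for a shift unless `f = 0`) gives `f = 0`.
Hence `(U^𝐤|_D)_𝐤` is a Hilbert sum, and its canonical unitary onto `ℓ²(ℕ^{n+1}, D)` intertwines
each `Uⱼ` with the `j`-th coordinate shift, as is checked on the vectors `e_𝐤 ⊗ η`. The model
`ℓ²(ℕ, ℓ²(ℕⁿ, E))` is another Hilbert sum of copies of `D`, obtained by splitting off the first
coordinate and transporting along a unitary `D ≅ E`, which exists because the Hilbert dimensions
agree.
-/

open scoped InnerProductSpace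

section Operators

variable {H : Type*} [NormedAddCommGroup H] [InnerProductSpace ℂ H] [CompleteSpace H]

theorem adjoint_mul_self_of_norm_map {A : H →L[ℂ] H} (hA : ∀ x, ‖A x‖ = ‖x‖) :
    adjoint A * A = 1 :=
  (norm_map_iff_adjoint_comp_self A).1 hA

theorem ContinuousLinearMap.adjoint_pow (A : H →L[ℂ] H) (a : ℕ) :
    adjoint (A ^ a) = adjoint A ^ a := by
  simp only [← star_eq_adjoint, star_pow]

theorem inner_pow_apply_pow_apply {A : H →L[ℂ] H} (hA : ∀ x, ‖A x‖ = ‖x‖) (a : ℕ) (x y : H) :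
    ⟪(A ^ a) x, (A ^ a) y⟫_ℂ = ⟪x, y⟫_ℂ :=
  (inner_map_map_iff_adjoint_comp_self _).2
    (by rw [adjoint_pow]; exact pow_mul_pow_eq_one a (adjoint_mul_self_of_norm_map hA)) x y

structure IsDoublyCommuting {ι : Type*} (U : ι → H →L[ℂ] H) : Prop where
  commute : ∀ i j, Commute (U i) (U j)
  commute_adjoint : ∀ i j, i ≠ j → Commute (adjoint (U i)) (U j)

theorem IsDoublyCommuting.commute_adjoint_adjoint {ι : Type*} {U : ι → H →L[ℂ] H}
    (hU : IsDoublyCommuting U) (i j : ι) : Commute (adjoint (U i)) (adjoint (U j)) :=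
  (hU.commute i j).star_star

theorem IsDoublyCommuting.cons {n : ℕ} {A : H →L[ℂ] H} {B : Fin n → H →L[ℂ] H}
    (hB : IsDoublyCommuting B) (hAB : ∀ i, Commute A (B i))
    (hA'B : ∀ i, Commute (adjoint A) (B i)) :
    IsDoublyCommuting (Fin.cons A B : Fin (n + 1) → H →L[ℂ] H) where
  commute i j := by
    cases i using Fin.cases <;> cases j using Fin.cases <;>
      simp only [Fin.cons_zero, Fin.cons_succ]
    · exact Commute.refl A
    · exact hAB _
    · exact (hAB _).symm
    · exact hB.commute _ _
  commute_adjoint i j hij := by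
    cases i using Fin.cases <;> cases j using Fin.cases <;>
      simp only [Fin.cons_zero, Fin.cons_succ]
    · exact absurd rfl hij
    · exact hA'B _
    · simpa only [← star_eq_adjoint, star_star] using ((hA'B _).star_star).symm
    · exact hB.commute_adjoint _ _ fun h => hij (congrArg Fin.succ h)

variable {m : ℕ} (U : Fin m → H →L[ℂ] H)

def jointWandering : Submodule ℂ H :=
  ⨅ j, LinearMap.ker (adjoint (U j) : H →ₗ[ℂ] H)

variable {U} in
theorem mem_jointWandering {x : H} : x ∈ jointWandering U ↔ ∀ j, adjoint (U j) x = 0 := by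
  simp [jointWandering, Submodule.mem_iInf]

theorem isClosed_jointWandering : IsClosed (jointWandering U : Set H) := by
  rw [jointWandering, Submodule.coe_iInf]
  exact isClosed_iInter fun j => (adjoint (U j)).isClosed_ker

instance : CompleteSpace (jointWandering U) :=
  (isClosed_jointWandering U).completeSpace_coe

theorem jointWandering_cons {n : ℕ} (A : H →L[ℂ] H) (B : Fin n → H →L[ℂ] H) :
    jointWandering (Fin.cons A B : Fin (n + 1) → H →L[ℂ] H) =
      LinearMap.ker (adjoint A : H →ₗ[ℂ] H) ⊓ ⨅ i, LinearMap.ker (adjoint (B i) : H →ₗ[ℂ] H) := by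
  ext x
  simp [mem_jointWandering, Submodule.mem_iInf, Fin.forall_fin_succ]

end Operators

section ProdPow

variable {H : Type*} [NormedAddCommGroup H] [InnerProductSpace ℂ H]
variable {m : ℕ} (U : Fin m → H →L[ℂ] H)

theorem prodPow_succ (U : Fin (m + 1) → H →L[ℂ] H) (k : Fin (m + 1) → ℕ) :
    prodPow U k = U 0 ^ k 0 * prodPow (Fin.tail U) (Fin.tail k) := by
  rw [prodPow, List.ofFn_succ, List.prod_cons]
  rfl

@[simp]
theorem prodPow_zero : prodPow U 0 = 1 := by
  simp [prodPow]

theorem commute_prodPow {A : H →L[ℂ] H} {k : Fin m → ℕ} (h : ∀ i, Commute A (U i ^ k i)) :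
    Commute A (prodPow U k) :=
  Commute.list_prod_right _ _ fun B hB => by
    obtain ⟨i, rfl⟩ := List.mem_ofFn.1 hB
    exact h i

theorem pow_mul_prodPow (k : Fin m → ℕ) (j : Fin m) (hj : ∀ i, Commute (U j) (U i)) (a : ℕ) :
    U j ^ a * prodPow U k = prodPow U (Function.update k j (k j + a)) := by
  induction m with
  | zero => exact j.elim0
  | succ m ih =>
    rw [prodPow_succ, prodPow_succ]
    cases j using Fin.cases with
    | zero =>
      rw [Fin.tail_update_zero, Function.update_self, ← mul_assoc, ← pow_add, add_comm a (k 0)]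
    | succ t =>
      rw [Fin.tail_update_succ, Function.update_of_ne (Fin.succ_ne_zero t).symm, ← mul_assoc,
        ((hj 0).pow_pow a (k 0)).eq, mul_assoc]
      exact congrArg _ (ih (Fin.tail U) (Fin.tail k) t fun i => hj i.succ)

theorem prodPow_eq_pow_mul (k : Fin m → ℕ) (j : Fin m) (hj : ∀ i, Commute (U j) (U i)) :
    prodPow U k = U j ^ k j * prodPow U (Function.update k j 0) := by
  rw [pow_mul_prodPow U _ j hj, Function.update_idem, Function.update_self, zero_add,
    Function.update_eq_self]

end ProdPow

section Orthogonality

variable {H : Type*} [NormedAddCommGroup H] [InnerProductSpace ℂ H] [CompleteSpace H]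
variable {m : ℕ} {U : Fin m → H →L[ℂ] H}

theorem norm_prodPow_apply (hiso : ∀ j x, ‖U j x‖ = ‖x‖) (k : Fin m → ℕ) (x : H) :
    ‖prodPow U k x‖ = ‖x‖ := by
  refine (norm_map_iff_adjoint_comp_self (prodPow U k)).2 ?_ x
  refine List.prod_induction (fun T : H →L[ℂ] H => adjoint T * T = 1) (fun S T hS hT => ?_) ?_ ?_
  · simp only [← star_eq_adjoint] at hS hT ⊢
    rw [star_mul, mul_assoc, ← mul_assoc (star S), hS, one_mul, hT]
  · rw [← star_eq_adjoint, star_one, one_mul]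
  · intro T hT
    obtain ⟨j, rfl⟩ := List.mem_ofFn.1 hT
    rw [adjoint_pow]
    exact pow_mul_pow_eq_one _ (adjoint_mul_self_of_norm_map (hiso j))

theorem inner_prodPow_eq_zero_of_lt (hiso : ∀ j x, ‖U j x‖ = ‖x‖) (hU : IsDoublyCommuting U)
    {k l : Fin m → ℕ} {j : Fin m} (hj : l j < k j) (x : H) {y : H} (hy : adjoint (U j) y = 0) :
    ⟪prodPow U k x, prodPow U l y⟫_ℂ = 0 := by
  obtain ⟨c, hc⟩ : ∃ c, k j = l j + (c + 1) := ⟨k j - l j - 1, by omega⟩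
  have hcomm : Commute (adjoint (U j) ^ (c + 1)) (prodPow U (Function.update l j 0)) := by
    refine commute_prodPow U fun i => ?_
    rcases eq_or_ne i j with rfl | hij
    · simp
    · exact ((hU.commute_adjoint j i hij.symm).pow_left _).pow_right _
  set X := prodPow U (Function.update k j 0) x
  set Y := prodPow U (Function.update l j 0) y
  have hvanish : (adjoint (U j) ^ (c + 1)) Y = 0 := by
    rw [← mul_apply_eq_comp, hcomm.eq, mul_apply_eq_comp, pow_succ, mul_apply_eq_comp, hy,
      map_zero, map_zero]
  calc ⟪prodPow U k x, prodPow U l y⟫_ℂ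
      = ⟪(U j ^ l j) ((U j ^ (c + 1)) X), (U j ^ l j) Y⟫_ℂ := by
        rw [prodPow_eq_pow_mul U k j (hU.commute j), prodPow_eq_pow_mul U l j (hU.commute j), hc,
          pow_add, mul_assoc]
        rfl
    _ = ⟪X, (adjoint (U j) ^ (c + 1)) Y⟫_ℂ := by
        rw [inner_pow_apply_pow_apply (hiso j), ← adjoint_pow, adjoint_inner_right]
    _ = 0 := by rw [hvanish, inner_zero_right]

theorem inner_prodPow_eq_zero (hiso : ∀ j x, ‖U j x‖ = ‖x‖) (hU : IsDoublyCommuting U)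
    {k l : Fin m → ℕ} (hkl : k ≠ l) {x y : H} (hx : x ∈ jointWandering U)
    (hy : y ∈ jointWandering U) : ⟪prodPow U k x, prodPow U l y⟫_ℂ = 0 := by
  obtain ⟨j, hj⟩ := Function.ne_iff.1 hkl
  rcases hj.lt_or_gt with hlt | hgt
  · rw [← inner_conj_symm, inner_prodPow_eq_zero_of_lt hiso hU hlt y (mem_jointWandering.1 hx j),
      map_zero]
  · exact inner_prodPow_eq_zero_of_lt hiso hU hgt x (mem_jointWandering.1 hy j)

end Orthogonality

section Wold

variable {H : Type*} [NormedAddCommGroup H] [InnerProductSpace ℂ H] [CompleteSpace H]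

def wanderingProj (A : H →L[ℂ] H) : H →L[ℂ] H :=
  1 - A * adjoint A

theorem adjoint_mul_wanderingProj {A : H →L[ℂ] H} (hA : ∀ x, ‖A x‖ = ‖x‖) :
    adjoint A * wanderingProj A = 0 := by
  rw [wanderingProj, mul_sub, mul_one, ← mul_assoc, adjoint_mul_self_of_norm_map hA, one_mul,
    sub_self]

theorem eq_zero_of_forall_wanderingProj_adjoint_pow_apply_eq_zero {A : H →L[ℂ] H}
    (hA : IsShiftOp A) {x : H} (h : ∀ a, wanderingProj A ((adjoint A ^ a) x) = 0) : x = 0 := by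
  have hstep : ∀ a, (adjoint A ^ a) x = A ((adjoint A ^ (a + 1)) x) := fun a => by
    have := h a
    rw [wanderingProj, sub_apply, one_apply_eq_self, mul_apply_eq_comp, sub_eq_zero] at this
    rw [this, pow_succ', mul_apply_eq_comp]
  have hnorm : ∀ a, ‖(adjoint A ^ a) x‖ = ‖x‖ := fun a => by
    induction a with
    | zero => rfl
    | succ a ih => rw [← ih, hstep a, hA.1]
  have hlim := hA.2 x
  simp only [hnorm] at hlim
  exact norm_eq_zero.1 (tendsto_nhds_unique tendsto_const_nhds hlim)

variable {m : ℕ} {U : Fin m → H →L[ℂ] H}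

theorem IsDoublyCommuting.commute_adjoint_wanderingProj (hU : IsDoublyCommuting U) {i j : Fin m}
    (hij : i ≠ j) : Commute (adjoint (U i)) (wanderingProj (U j)) :=
  (Commute.one_right _).sub_right
    ((hU.commute_adjoint i j hij).mul_right (hU.commute_adjoint_adjoint i j))

variable (U) in
def wanderingProjProd (L : List (Fin m)) : H →L[ℂ] H :=
  (L.map fun j => wanderingProj (U j)).prod

theorem wanderingProjProd_cons (j : Fin m) (L : List (Fin m)) :
    wanderingProjProd U (j :: L) = wanderingProj (U j) * wanderingProjProd U L := by
  simp [wanderingProjProd]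

theorem inner_wanderingProjProd_right {L : List (Fin m)} {d : H}
    (hd : ∀ j ∈ L, adjoint (U j) d = 0) (g : H) :
    ⟪d, wanderingProjProd U L g⟫_ℂ = ⟪d, g⟫_ℂ := by
  induction L with
  | nil => simp [wanderingProjProd]
  | cons j L ih =>
    rw [wanderingProjProd_cons, mul_apply_eq_comp, wanderingProj, sub_apply, one_apply_eq_self,
      inner_sub_right, mul_apply_eq_comp, ← adjoint_inner_left (U j), hd j List.mem_cons_self,
      inner_zero_left, sub_zero]
    exact ih fun i hi => hd i (List.mem_cons_of_mem j hi)

theorem adjoint_mul_wanderingProjProd (hiso : ∀ j x, ‖U j x‖ = ‖x‖) (hU : IsDoublyCommuting U)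
    {L : List (Fin m)} {j : Fin m} (hj : j ∈ L) : adjoint (U j) * wanderingProjProd U L = 0 := by
  induction L with
  | nil => simp at hj
  | cons t L ih =>
    rw [wanderingProjProd_cons, ← mul_assoc]
    rcases eq_or_ne j t with rfl | hjt
    · rw [adjoint_mul_wanderingProj (hiso j), zero_mul]
    · rw [(hU.commute_adjoint_wanderingProj hjt).eq, mul_assoc,
        ih ((List.mem_cons.1 hj).resolve_left hjt), mul_zero]

theorem adjoint_pow_mul_adjoint_prodPow (hU : IsDoublyCommuting U) (k : Fin m → ℕ) (j : Fin m)
    (a : ℕ) : adjoint (U j) ^ a * adjoint (prodPow U k) =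
      adjoint (prodPow U (Function.update k j (k j + a))) := by
  have hcomm : Commute (U j ^ a) (prodPow U k) :=
    commute_prodPow U fun i => (hU.commute j i).pow_pow a (k i)
  rw [← pow_mul_prodPow U k j (hU.commute j), hcomm.eq]
  simp only [← star_eq_adjoint, star_mul, star_pow]

theorem eq_zero_of_forall_wanderingProjProd_adjoint_prodPow_apply_eq_zero
    (hshift : ∀ j, IsShiftOp (U j)) (hU : IsDoublyCommuting U) {L : List (Fin m)} (hL : L.Nodup)
    {f : H} (h : ∀ k, wanderingProjProd U L (adjoint (prodPow U k) f) = 0) : f = 0 := by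
  induction L with
  | nil => simpa [wanderingProjProd, ← star_eq_adjoint] using h 0
  | cons j L ih =>
    obtain ⟨hjL, hL⟩ := List.nodup_cons.1 hL
    refine ih hL fun k => eq_zero_of_forall_wanderingProj_adjoint_pow_apply_eq_zero (hshift j)
      fun a => ?_
    have hcomm : Commute (adjoint (U j) ^ a) (wanderingProjProd U L) :=
      (Commute.list_prod_right _ _ fun B hB => by
        obtain ⟨i, hi, rfl⟩ := List.mem_map.1 hB
        exact hU.commute_adjoint_wanderingProj fun hji => hjL (hji ▸ hi)).pow_left a
    calc wanderingProj (U j) ((adjoint (U j) ^ a) (wanderingProjProd U L (adjoint (prodPow U k) f)))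
        = wanderingProjProd U (j :: L)
            ((adjoint (U j) ^ a * adjoint (prodPow U k)) f) := by
          rw [← mul_apply_eq_comp (adjoint (U j) ^ a), hcomm.eq, wanderingProjProd_cons]
          simp only [mul_apply_eq_comp]
      _ = 0 := by rw [adjoint_pow_mul_adjoint_prodPow hU]; exact h _

theorem topologicalClosure_iSup_eq_top_of_forall_inner {E ι : Type*} [NormedAddCommGroup E]
    [InnerProductSpace ℂ E] [CompleteSpace E] {K : ι → Submodule ℂ E}
    (h : ∀ w, (∀ i, ∀ u ∈ K i, ⟪u, w⟫_ℂ = 0) → w = 0) : (⨆ i, K i).topologicalClosure = ⊤ := by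
  rw [Submodule.topologicalClosure_eq_top_iff, Submodule.eq_bot_iff]
  exact fun w hw => h w fun i u hu =>
    Submodule.inner_right_of_mem_orthogonal (Submodule.mem_iSup_of_mem i hu) hw

theorem topologicalClosure_iSup_map_prodPow_eq_top (hshift : ∀ j, IsShiftOp (U j))
    (hU : IsDoublyCommuting U) :
    (⨆ k, (jointWandering U).map (prodPow U k : H →ₗ[ℂ] H)).topologicalClosure = ⊤ := by
  refine topologicalClosure_iSup_eq_top_of_forall_inner fun f hf => ?_
  refine eq_zero_of_forall_wanderingProjProd_adjoint_prodPow_apply_eq_zero hshift hU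
    (List.nodup_finRange m) fun k => ?_
  set g := wanderingProjProd U (List.finRange m) (adjoint (prodPow U k) f)
  have hg : g ∈ jointWandering U := mem_jointWandering.2 fun j => by
    rw [← mul_apply_eq_comp,
      adjoint_mul_wanderingProjProd (fun j => (hshift j).1) hU (List.mem_finRange j), zero_apply]
  -- `g` lies in the wandering subspace and is orthogonal to it
  have : ⟪g, g⟫_ℂ = 0 := by
    rw [inner_wanderingProjProd_right fun j _ => mem_jointWandering.1 hg j, adjoint_inner_right]
    exact hf k _ (Submodule.mem_map_of_mem hg)
  exact inner_self_eq_zero.1 this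

end Wold

section LpSingle

variable {ι : Type*} [DecidableEq ι] {G : Type*} [NormedAddCommGroup G] [InnerProductSpace ℂ G]

def lp.singleₗᵢ (i : ι) : G →ₗᵢ[ℂ] lp (fun _ : ι => G) 2 where
  toFun x := lp.single 2 i x
  map_add' := lp.single_add (E := fun _ : ι => G) 2 i
  map_smul' := by simp
  norm_map' := lp.norm_single (E := fun _ : ι => G) (p := 2) (by norm_num) i

@[simp]
theorem lp.singleₗᵢ_apply (i : ι) (x : G) : lp.singleₗᵢ i x = lp.single 2 i x :=
  rfl

theorem lp.inner_single_single (i j : ι) (x y : G) :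
    ⟪lp.single 2 i x, (lp.single 2 j y : lp (fun _ : ι => G) 2)⟫_ℂ =
      if i = j then ⟪x, y⟫_ℂ else 0 := by
  rw [lp.inner_single_left, lp.single_apply, Pi.single_apply]
  split_ifs <;> simp_all

theorem lp.intertwines_of_single {X : Type*} [NormedAddCommGroup X] [InnerProductSpace ℂ X]
    (Φ : lp (fun _ : ι => G) 2 ≃ₗᵢ[ℂ] X) {S : lp (fun _ : ι => G) 2 →L[ℂ] lp (fun _ : ι => G) 2}
    {T : X →L[ℂ] X} (h : ∀ i x, Φ (S (lp.single 2 i x)) = T (Φ (lp.single 2 i x)))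
    (w : lp (fun _ : ι => G) 2) : Φ (S w) = T (Φ w) := by
  have := lp.ext_continuousLinearMap (𝕜 := ℂ) (p := 2) (by norm_num)
    (f := (Φ.toContinuousLinearEquiv : lp (fun _ : ι => G) 2 →L[ℂ] X).comp S)
    (g := T.comp (Φ.toContinuousLinearEquiv : lp (fun _ : ι => G) 2 →L[ℂ] X))
    fun i => ContinuousLinearMap.ext fun x => h i x
  exact congr($this w)

end LpSingle

section Shifts

variable {G : Type*} [NormedAddCommGroup G]

theorem Function.update_sub_one_eq_iff {ι : Type*} [DecidableEq ι] {l t : ι → ℕ} {i : ι} :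
    (1 ≤ l i ∧ Function.update l i (l i - 1) = t) ↔ l = Function.update t i (t i + 1) := by
  rw [Function.update_eq_iff, Function.eq_update_iff]
  constructor
  · rintro ⟨h1, h2, h3⟩
    exact ⟨by omega, h3⟩
  · rintro ⟨h1, h2⟩
    exact ⟨by omega, by omega, h2⟩

theorem coordShift_single_apply {N : ℕ} (i : Fin N) (t l : Fin N → ℕ) (x : G) :
    (if 1 ≤ l i then (lp.single 2 t x : lp (fun _ : Fin N → ℕ => G) 2)
        (Function.update l i (l i - 1)) else 0) =
      (lp.single 2 (Function.update t i (t i + 1)) x : lp (fun _ : Fin N → ℕ => G) 2) l := by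
  simp only [lp.single_apply, Pi.single_apply, ← Function.update_sub_one_eq_iff]
  by_cases h : 1 ≤ l i <;> simp [h]

theorem IsCoordShift.apply_single [InnerProductSpace ℂ G] {N : ℕ} {i : Fin N}
    {S : lp (fun _ : Fin N → ℕ => G) 2 →L[ℂ] lp (fun _ : Fin N → ℕ => G) 2}
    (hS : IsCoordShift i S) (t : Fin N → ℕ) (x : G) :
    S (lp.single 2 t x) = lp.single 2 (Function.update t i (t i + 1)) x := by
  ext l
  rw [hS, coordShift_single_apply]

theorem IsUnilateralShift.apply_single [InnerProductSpace ℂ G]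
    {S : lp (fun _ : ℕ => G) 2 →L[ℂ] lp (fun _ : ℕ => G) 2}
    (hS : IsUnilateralShift S) (a : ℕ) (x : G) : S (lp.single 2 a x) = lp.single 2 (a + 1) x := by
  ext j
  cases j with
  | zero => simp [(hS _).1, lp.single_apply]
  | succ j => simp [(hS _).2 j, lp.single_apply, Pi.single_apply]

theorem IsKappa.apply_single {n : ℕ} {E : Type u} [NormedAddCommGroup E] [InnerProductSpace ℂ E]
    {i : Fin n} {M : ModelSpace n E →L[ℂ] ModelSpace n E} (hM : IsKappa i M) (a : ℕ)
    (t : Fin n → ℕ) (x : E) :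
    M (lp.single 2 a (lp.single 2 t x)) =
      lp.single 2 a (lp.single 2 (Function.update t i (t i + 1)) x) := by
  ext b l
  rw [hM]
  rcases eq_or_ne b a with rfl | hba
  · simp only [lp.single_apply_self, coordShift_single_apply]
  · rw [lp.single_apply_ne 2 a _ hba, lp.single_apply_ne 2 a _ hba]
    simp

end Shifts

section WanderingRepr

variable {H : Type*} [NormedAddCommGroup H] [InnerProductSpace ℂ H] [CompleteSpace H]
variable {m : ℕ} {U : Fin m → H →L[ℂ] H}

def prodPowOnWandering (hiso : ∀ j x, ‖U j x‖ = ‖x‖) (k : Fin m → ℕ) :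
    jointWandering U →ₗᵢ[ℂ] H where
  toLinearMap := (prodPow U k : H →ₗ[ℂ] H).comp (jointWandering U).subtype
  norm_map' x := norm_prodPow_apply hiso k x

theorem isHilbertSum_prodPowOnWandering (hshift : ∀ j, IsShiftOp (U j))
    (hU : IsDoublyCommuting U) :
    IsHilbertSum ℂ (fun _ => jointWandering U) (prodPowOnWandering fun j => (hshift j).1) := by
  refine IsHilbertSum.mk
    (fun k l hkl x y => inner_prodPow_eq_zero (fun j => (hshift j).1) hU hkl x.2 y.2) ?_
  rw [← topologicalClosure_iSup_map_prodPow_eq_top hshift hU]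
  simp only [prodPowOnWandering, LinearMap.range_comp, Submodule.range_subtype, le_refl]

def wanderingRepr (hshift : ∀ j, IsShiftOp (U j)) (hU : IsDoublyCommuting U) :
    H ≃ₗᵢ[ℂ] lp (fun _ : Fin m → ℕ => jointWandering U) 2 :=
  (isHilbertSum_prodPowOnWandering hshift hU).linearIsometryEquiv

variable (hshift : ∀ j, IsShiftOp (U j)) (hU : IsDoublyCommuting U)

theorem wanderingRepr_symm_single (k : Fin m → ℕ) (η : jointWandering U) :
    (wanderingRepr hshift hU).symm (lp.single 2 k η) = prodPow U k η :=
  (isHilbertSum_prodPowOnWandering hshift hU).linearIsometryEquiv_symm_apply_single η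

theorem wanderingRepr_prodPow (k : Fin m → ℕ) (η : jointWandering U) :
    wanderingRepr hshift hU (prodPow U k η) = lp.single 2 k η := by
  rw [← wanderingRepr_symm_single hshift hU, LinearIsometryEquiv.apply_symm_apply]

theorem wanderingRepr_intertwines {j : Fin m}
    {S : lp (fun _ : Fin m → ℕ => jointWandering U) 2 →L[ℂ]
      lp (fun _ : Fin m → ℕ => jointWandering U) 2}
    (hS : IsCoordShift j S) (f : H) :
    wanderingRepr hshift hU (U j f) = S (wanderingRepr hshift hU f) := by
  have key := lp.intertwines_of_single (wanderingRepr hshift hU).symm (S := S) (T := U j)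
    fun k η => by
      rw [hS.apply_single, wanderingRepr_symm_single, wanderingRepr_symm_single,
        ← pow_mul_prodPow U k j (hU.commute j) 1, pow_one, mul_apply_eq_comp]
  simpa using congrArg (wanderingRepr hshift hU) (key (wanderingRepr hshift hU f)).symm

end WanderingRepr

section Model

variable {ι κ ι' : Type*} [DecidableEq ι] [DecidableEq κ]
variable {G E : Type*} [NormedAddCommGroup G] [InnerProductSpace ℂ G] [CompleteSpace G]
  [NormedAddCommGroup E] [InnerProductSpace ℂ E] [CompleteSpace E]

theorem isHilbertSum_singleₗᵢ_singleₗᵢ (σ : ι' ≃ ι × κ) (ε : G ≃ₗᵢ[ℂ] E) :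
    IsHilbertSum ℂ (fun _ : ι' => G) fun k =>
      (lp.singleₗᵢ (σ k).1).comp ((lp.singleₗᵢ (σ k).2).comp ε.toLinearIsometry) := by
  refine IsHilbertSum.mk (fun k l hkl x y => ?_) ?_
  · have hσ : σ k ≠ σ l := σ.injective.ne hkl
    simpa [lp.inner_single_single] using fun h1 h2 => absurd (Prod.ext h1 h2) hσ
  refine (topologicalClosure_iSup_eq_top_of_forall_inner fun w hw => ?_).ge
  ext a b
  have := hw (σ.symm (a, b)) _ ⟨ε.symm (w a b), rfl⟩
  simpa [lp.inner_single_left] using this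

def lpCurry (σ : ι' ≃ ι × κ) (ε : G ≃ₗᵢ[ℂ] E) :
    lp (fun _ : ι' => G) 2 ≃ₗᵢ[ℂ] lp (fun _ : ι => lp (fun _ : κ => E) 2) 2 :=
  (isHilbertSum_singleₗᵢ_singleₗᵢ σ ε).linearIsometryEquiv.symm

theorem lpCurry_single [DecidableEq ι'] (σ : ι' ≃ ι × κ) (ε : G ≃ₗᵢ[ℂ] E) (k : ι') (x : G) :
    lpCurry σ ε (lp.single 2 k x) = lp.single 2 (σ k).1 (lp.single 2 (σ k).2 (ε x)) :=
  (isHilbertSum_singleₗᵢ_singleₗᵢ σ ε).linearIsometryEquiv_symm_apply_single x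

end Model

theorem nonempty_linearIsometryEquiv_of_hilbertDimEq {E : Type u} {F : Type v}
    [NormedAddCommGroup E] [InnerProductSpace ℂ E] [CompleteSpace E]
    [NormedAddCommGroup F] [InnerProductSpace ℂ F] [CompleteSpace F]
    (h : HilbertDimEq E F) : Nonempty (E ≃ₗᵢ[ℂ] F) := by
  obtain ⟨wE, bE, -⟩ := exists_hilbertBasis ℂ E
  obtain ⟨wF, bF, -⟩ := exists_hilbertBasis ℂ F
  obtain ⟨e⟩ : Nonempty (wE ≃ wF) := Cardinal.lift_mk_eq'.1 (h wE wF bE bF)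
  have hsp : ⊤ ≤ (Submodule.span ℂ (Set.range (bF ∘ e))).topologicalClosure := by
    rw [Set.range_comp, e.surjective.range_eq, Set.image_univ, bF.dense_span]
  exact ⟨bE.repr.trans (HilbertBasis.mk (bF.orthonormal.comp e e.injective) hsp).repr.symm⟩

section ModelRepr

variable {n : ℕ} {G : Type*} [NormedAddCommGroup G] [InnerProductSpace ℂ G] [CompleteSpace G]
  {E : Type u} [NormedAddCommGroup E] [InnerProductSpace ℂ E] [CompleteSpace E]

def modelRepr (ε : G ≃ₗᵢ[ℂ] E) : lp (fun _ : Fin (n + 1) → ℕ => G) 2 ≃ₗᵢ[ℂ] ModelSpace n E :=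
  lpCurry (Fin.consEquiv fun _ => ℕ).symm ε

theorem modelRepr_single (ε : G ≃ₗᵢ[ℂ] E) (k : Fin (n + 1) → ℕ) (x : G) :
    modelRepr ε (lp.single 2 k x) = lp.single 2 (k 0) (lp.single 2 (Fin.tail k) (ε x)) :=
  lpCurry_single _ ε k x

variable {S : lp (fun _ : Fin (n + 1) → ℕ => G) 2 →L[ℂ] lp (fun _ : Fin (n + 1) → ℕ => G) 2}

theorem modelRepr_intertwines_zero (ε : G ≃ₗᵢ[ℂ] E) (hS : IsCoordShift 0 S)
    {Mz : ModelSpace n E →L[ℂ] ModelSpace n E} (hMz : IsUnilateralShift Mz)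
    (w : lp (fun _ : Fin (n + 1) → ℕ => G) 2) :
    modelRepr ε (S w) = Mz (modelRepr ε w) :=
  lp.intertwines_of_single (modelRepr ε) (fun k x => by
    rw [hS.apply_single, modelRepr_single, modelRepr_single, hMz.apply_single,
      Function.update_self, Fin.tail_update_zero]) w

theorem modelRepr_intertwines_succ (ε : G ≃ₗᵢ[ℂ] E) {i : Fin n} (hS : IsCoordShift i.succ S)
    {M : ModelSpace n E →L[ℂ] ModelSpace n E} (hM : IsKappa i M)
    (w : lp (fun _ : Fin (n + 1) → ℕ => G) 2) :
    modelRepr ε (S w) = M (modelRepr ε w) :=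
  lp.intertwines_of_single (modelRepr ε) (fun k x => by
    rw [hS.apply_single, modelRepr_single, modelRepr_single, hM.apply_single,
      Function.update_of_ne (Fin.succ_ne_zero i).symm, Fin.tail_update_succ]
    rfl) w

end ModelRepr

theorem statement8_general (n : ℕ)
    {H : Type u} [NormedAddCommGroup H] [InnerProductSpace ℂ H] [CompleteSpace H]
    (V : H →L[ℂ] H) (Vs : Fin n → (H →L[ℂ] H))
    (hV : IsShiftOp V) (hVs : ∀ i, IsShiftOp (Vs i))
    (hcomm : ∀ i, V ∘L Vs i = Vs i ∘L V)
    (hcomm' : ∀ i j, Vs i ∘L Vs j = Vs j ∘L Vs i)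
    (hdc : ∀ i, ContinuousLinearMap.adjoint V ∘L Vs i = Vs i ∘L ContinuousLinearMap.adjoint V)
    (hdc' : ∀ i j, i ≠ j →
      ContinuousLinearMap.adjoint (Vs i) ∘L Vs j = Vs j ∘L ContinuousLinearMap.adjoint (Vs i))
    (U : Fin (n + 1) → (H →L[ℂ] H)) (hU0 : U 0 = V) (hUs : ∀ i : Fin n, U i.succ = Vs i)
    (D : Submodule ℂ H)
    (hD : D = LinearMap.ker (ContinuousLinearMap.adjoint V : H →ₗ[ℂ] H) ⊓
      ⨅ i, LinearMap.ker (ContinuousLinearMap.adjoint (Vs i) : H →ₗ[ℂ] H))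
    (SS : Fin (n + 1) →
      (lp (fun _ : Fin (n + 1) → ℕ => ↥D) 2 →L[ℂ] lp (fun _ : Fin (n + 1) → ℕ => ↥D) 2))
    (hSS : ∀ j, IsCoordShift j (SS j)) :
    (∀ k l : Fin (n + 1) → ℕ, k ≠ l →
      ∀ x ∈ D, ∀ y ∈ D, (inner ℂ (prodPow U k x) (prodPow U l y) : ℂ) = 0) ∧
    ((⨆ k : Fin (n + 1) → ℕ, D.map (prodPow U k : H →ₗ[ℂ] H)).topologicalClosure = ⊤) ∧
    (∃ Γ : H ≃ₗᵢ[ℂ] lp (fun _ : Fin (n + 1) → ℕ => ↥D) 2,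
      (∀ (k : Fin (n + 1) → ℕ) (η : ↥D), Γ (prodPow U k (η : H)) = lp.single 2 k η) ∧
      (∀ (j : Fin (n + 1)) (f : H), Γ (U j f) = SS j (Γ f))) ∧
    (∀ (E : Type u) [NormedAddCommGroup E] [InnerProductSpace ℂ E] [CompleteSpace E],
      HilbertDimEq E ↥D →
      ∀ Mz : ModelSpace n E →L[ℂ] ModelSpace n E, IsUnilateralShift Mz →
      ∀ Mk : Fin n → (ModelSpace n E →L[ℂ] ModelSpace n E), (∀ i, IsKappa i (Mk i)) →
      ∃ Γ' : H ≃ₗᵢ[ℂ] ModelSpace n E,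
        (∀ f, Γ' (V f) = Mz (Γ' f)) ∧ ∀ (i : Fin n) f, Γ' (Vs i f) = Mk i (Γ' f)) := by
  obtain rfl : U = Fin.cons V Vs := funext fun j => Fin.cases hU0 hUs j
  obtain rfl : D = jointWandering (Fin.cons V Vs : Fin (n + 1) → H →L[ℂ] H) :=
    hD.trans (jointWandering_cons V Vs).symm
  have hshift : ∀ j, IsShiftOp ((Fin.cons V Vs : Fin (n + 1) → H →L[ℂ] H) j) :=
    Fin.forall_fin_succ.2 ⟨hV, hVs⟩
  have hU : IsDoublyCommuting (Fin.cons V Vs : Fin (n + 1) → H →L[ℂ] H) :=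
    IsDoublyCommuting.cons ⟨hcomm', hdc'⟩ hcomm hdc
  refine ⟨fun k l hkl x hx y hy => inner_prodPow_eq_zero (fun j => (hshift j).1) hU hkl hx hy,
    topologicalClosure_iSup_map_prodPow_eq_top hshift hU,
    ⟨wanderingRepr hshift hU, wanderingRepr_prodPow hshift hU,
      fun j => wanderingRepr_intertwines hshift hU (hSS j)⟩, ?_⟩
  intro E _ _ _ hdim Mz hMz Mk hMk
  obtain ⟨ε⟩ := nonempty_linearIsometryEquiv_of_hilbertDimEq hdim
  refine ⟨(wanderingRepr hshift hU).trans (modelRepr ε.symm), fun f => ?_, fun i f => ?_⟩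
  · exact (congrArg (modelRepr ε.symm) (wanderingRepr_intertwines hshift hU (hSS 0) f)).trans
      (modelRepr_intertwines_zero ε.symm (hSS 0) hMz _)
  · exact (congrArg (modelRepr ε.symm) (wanderingRepr_intertwines hshift hU (hSS i.succ) f)).trans
      (modelRepr_intertwines_succ ε.symm (hSS i.succ) (hMk i) _)

/-- For a doubly commuting tuple of shifts `(V, V₁, …, Vₙ)` with joint wandering
subspace `D = ker V* ∩ ⋂ᵢ ker Vᵢ*`: the subspaces `U^𝐤 D` are pairwise orthogonal with dense
linear span, the map `Γ(U^𝐤 η) = e_𝐤 ⊗ η` extends to a unitary `H → ℓ²(ℕ^{n+1}, D)` intertwining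
`Uⱼ` with the coordinate shifts, and consequently `(V, V₁, …, Vₙ)` is unitarily equivalent to
`(M_z, M_{κ₁}, …, M_{κₙ})` on `ℓ²(ℕ, ℓ²(ℕⁿ, E))` for any Hilbert space `E` with
`dim E = dim D`. -/
theorem statement8 (n : ℕ) (hn : 1 ≤ n)
    {H : Type u} [NormedAddCommGroup H] [InnerProductSpace ℂ H] [CompleteSpace H]
    (V : H →L[ℂ] H) (Vs : Fin n → (H →L[ℂ] H))
    (hV : IsShiftOp V) (hVs : ∀ i, IsShiftOp (Vs i))
    (hcomm : ∀ i, V ∘L Vs i = Vs i ∘L V)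
    (hcomm' : ∀ i j, Vs i ∘L Vs j = Vs j ∘L Vs i)
    (hdc : ∀ i, ContinuousLinearMap.adjoint V ∘L Vs i = Vs i ∘L ContinuousLinearMap.adjoint V)
    (hdc' : ∀ i j, i ≠ j →
      ContinuousLinearMap.adjoint (Vs i) ∘L Vs j = Vs j ∘L ContinuousLinearMap.adjoint (Vs i))
    (U : Fin (n + 1) → (H →L[ℂ] H)) (hU0 : U 0 = V) (hUs : ∀ i : Fin n, U i.succ = Vs i)
    (D : Submodule ℂ H)
    (hD : D = LinearMap.ker (ContinuousLinearMap.adjoint V : H →ₗ[ℂ] H) ⊓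
      ⨅ i, LinearMap.ker (ContinuousLinearMap.adjoint (Vs i) : H →ₗ[ℂ] H))
    (SS : Fin (n + 1) →
      (lp (fun _ : Fin (n + 1) → ℕ => ↥D) 2 →L[ℂ] lp (fun _ : Fin (n + 1) → ℕ => ↥D) 2))
    (hSS : ∀ j, IsCoordShift j (SS j)) :
    (∀ k l : Fin (n + 1) → ℕ, k ≠ l →
      ∀ x ∈ D, ∀ y ∈ D, (inner ℂ (prodPow U k x) (prodPow U l y) : ℂ) = 0) ∧
    ((⨆ k : Fin (n + 1) → ℕ, D.map (prodPow U k : H →ₗ[ℂ] H)).topologicalClosure = ⊤) ∧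
    (∃ Γ : H ≃ₗᵢ[ℂ] lp (fun _ : Fin (n + 1) → ℕ => ↥D) 2,
      (∀ (k : Fin (n + 1) → ℕ) (η : ↥D), Γ (prodPow U k (η : H)) = lp.single 2 k η) ∧
      (∀ (j : Fin (n + 1)) (f : H), Γ (U j f) = SS j (Γ f))) ∧
    (∀ (E : Type u) [NormedAddCommGroup E] [InnerProductSpace ℂ E] [CompleteSpace E],
      HilbertDimEq E ↥D →
      ∀ Mz : ModelSpace n E →L[ℂ] ModelSpace n E, IsUnilateralShift Mz →
      ∀ Mk : Fin n → (ModelSpace n E →L[ℂ] ModelSpace n E), (∀ i, IsKappa i (Mk i)) →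
      ∃ Γ' : H ≃ₗᵢ[ℂ] ModelSpace n E,
        (∀ f, Γ' (V f) = Mz (Γ' f)) ∧ ∀ (i : Fin n) f, Γ' (Vs i f) = Mk i (Γ' f)) :=
  statement8_general n V Vs hV hVs hcomm hcomm' hdc hdc' U hU0 hUs D hD SS hSS
end
end

section
/- Let n ≥ 1, let E be a complex Hilbert space, K = ℓ²(ℕⁿ, E), and H = ℓ²(ℕ, K) with unilateral shift M_z and entrywise coordinate-shift operators M_{κ₁}, …, M_{κₙ}. Let S ⊆ H be a closed subspace invariant under M_z and all M_{κᵢ}, let W = S ⊖ M_z S, let Π : ℓ²(ℕ, W) → H be the isometry determined by Π(e_m ⊗ η) = M_zᵐ η (so range Π = S and Π S_W = M_z Π), and set Tᵢ = Π* M_{κᵢ} Π. Suppose W̃ is another Hilbert space, Π̃ : ℓ²(ℕ, W̃) → H is an isometry with range S satisfying Π̃ S_{W̃} = M_z Π̃ and Π̃ T̃ᵢ = M_{κᵢ} Π̃, where each T̃ᵢ is a shift on ℓ²(ℕ, W̃) commuting with S_{W̃}. Then there exists a unitary τ : W → W̃ such that Π = Π̃ ∘ (I ⊗ τ) and (I ⊗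 τ) Tᵢ = T̃ᵢ (I ⊗ τ) for all i = 1, …, n, where I ⊗ τ : ℓ²(ℕ, W) → ℓ²(ℕ, W̃) acts entrywise by ((I ⊗ τ) g)(m) = τ(g(m)). -/
noncomputable section

open Filter Topology MeasureTheory ContinuousLinearMap

universe u v

/-!
Since `Θ` and `Θ̃` are isometries onto the same subspace `S`, `U = Θ̃⁻¹ Θ` is a unitary
`ℓ²(ℕ, W) → ℓ²(ℕ, W̃)`, and it intertwines `S_W` with `S_{W̃}` because both are conjugate to
`M_z` on `S`. An intertwining unitary maps the wandering subspace `(range S_W)ᗮ = e₀ ⊗ W` onto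
`e₀ ⊗ W̃`; this defines `τ`, and commuting with the shifts forces `U = I ⊗ τ`. Finally `Θ Θ*` is
the projection onto `S`, which is `M_{κᵢ}`-invariant as `M_{κᵢ} Θ̃ = Θ̃ T̃ᵢ`, so
`Θ Tᵢ = M_{κᵢ} Θ`, and injectivity of `Θ̃` turns this into `U Tᵢ = T̃ᵢ U`.
-/

local notation "⟪" x ", " y "⟫" => @inner ℂ _ _ x y

namespace IsUnilateralShift

variable {W : Type*} [NormedAddCommGroup W] [InnerProductSpace ℂ W]
  {S : lp (fun _ : ℕ => W) 2 →L[ℂ] lp (fun _ : ℕ => W) 2}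

theorem apply_single_s12 (hS : IsUnilateralShift S) (m : ℕ) (η : W) :
    S (lp.single 2 m η) = lp.single 2 (m + 1) η := by
  apply lp.ext
  funext j
  cases j with
  | zero => rw [(hS _).1, lp.single_apply_ne _ _ _ (by omega)]
  | succ k => simp [(hS _).2 k, lp.single_apply, Pi.single_apply]

theorem inner_single_zero_left (hS : IsUnilateralShift S) (η : W) (f : lp (fun _ : ℕ => W) 2) :
    ⟪lp.single 2 0 η, S f⟫ = 0 := by
  rw [lp.inner_single_left, (hS f).1, inner_zero_right]

theorem eq_single_zero_of_inner_eq_zero (hS : IsUnilateralShift S) {g : lp (fun _ : ℕ => W) 2}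
    (hg : ∀ f, ⟪g, S f⟫ = 0) : g = lp.single 2 0 (g 0) := by
  apply lp.ext
  funext j
  cases j with
  | zero => rw [lp.single_apply_self]
  | succ m =>
    have h := hg (lp.single 2 m (g (m + 1)))
    rw [hS.apply_single_s12, lp.inner_single_right, inner_self_eq_zero] at h
    rw [h, lp.single_apply_ne _ _ _ (by omega)]

end IsUnilateralShift

section Intertwining

variable {W W' : Type*} [NormedAddCommGroup W] [InnerProductSpace ℂ W]
  [NormedAddCommGroup W'] [InnerProductSpace ℂ W']
  {S : lp (fun _ : ℕ => W) 2 →L[ℂ] lp (fun _ : ℕ => W) 2}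
  {S' : lp (fun _ : ℕ => W') 2 →L[ℂ] lp (fun _ : ℕ => W') 2}
  {U : lp (fun _ : ℕ => W) 2 ≃ₗᵢ[ℂ] lp (fun _ : ℕ => W') 2}

theorem symm_apply_shift_of_intertwines (hU : ∀ g, U (S g) = S' (U g))
    (h : lp (fun _ : ℕ => W') 2) : U.symm (S' h) = S (U.symm h) :=
  U.injective <| by rw [hU, U.apply_symm_apply, U.apply_symm_apply]

theorem map_single_zero_of_intertwines (hS : IsUnilateralShift S) (hS' : IsUnilateralShift S')
    (hU : ∀ g, U (S g) = S' (U g)) (η : W) :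
    U (lp.single 2 0 η) = lp.single 2 0 (U (lp.single 2 0 η) 0) :=
  hS'.eq_single_zero_of_inner_eq_zero fun f => by
    rw [← U.apply_symm_apply f, ← hU, U.inner_map_map]
    exact hS.inner_single_zero_left η _

theorem map_single_of_map_single_zero (hS : IsUnilateralShift S) (hS' : IsUnilateralShift S')
    (hU : ∀ g, U (S g) = S' (U g)) {τ : W → W'}
    (hτ : ∀ η, U (lp.single 2 0 η) = lp.single 2 0 (τ η)) (m : ℕ) (η : W) :
    U (lp.single 2 m η) = lp.single 2 m (τ η) := by
  induction m with
  | zero => exact hτ η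
  | succ m ih => rw [← hS.apply_single_s12, hU, ih, hS'.apply_single_s12]

theorem apply_eq_of_map_single (τ : W ≃ₗᵢ[ℂ] W')
    (hτ : ∀ m η, U (lp.single 2 m η) = lp.single 2 m (τ η)) (g : lp (fun _ : ℕ => W) 2)
    (m : ℕ) : U g m = τ (g m) := by
  refine ext_inner_right ℂ fun ξ => ?_
  calc ⟪U g m, ξ⟫ = ⟪U g, lp.single 2 m ξ⟫ := (lp.inner_single_right _ _ _).symm
    _ = ⟪U g, U (lp.single 2 m (τ.symm ξ))⟫ := by rw [hτ, τ.apply_symm_apply]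
    _ = ⟪τ (g m), ξ⟫ := by
      rw [U.inner_map_map, lp.inner_single_right, ← τ.inner_map_map, τ.apply_symm_apply]

theorem exists_diagonal_of_intertwines (hS : IsUnilateralShift S) (hS' : IsUnilateralShift S')
    (hU : ∀ g, U (S g) = S' (U g)) :
    ∃ τ : W ≃ₗᵢ[ℂ] W', ∀ g m, U g m = τ (g m) := by
  have h₀ := map_single_zero_of_intertwines hS hS' hU
  have hnorm : ∀ η, ‖U (lp.single 2 0 η) 0‖ = ‖η‖ := fun η =>
    calc ‖U (lp.single 2 0 η) 0‖
        = ‖lp.single (E := fun _ : ℕ => W') 2 0 (U (lp.single 2 0 η) 0)‖ :=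
          (lp.norm_single (E := fun _ : ℕ => W') (p := 2) (by norm_num) _ _).symm
      _ = ‖η‖ := by
        rw [← h₀, U.norm_map]
        exact lp.norm_single (E := fun _ : ℕ => W) (p := 2) (by norm_num) _ _
  let τ₀ : W →ₗᵢ[ℂ] W' :=
    { toLinearMap := lp.evalₗ (𝕜 := ℂ) (fun _ : ℕ => W') 2 0 ∘ₗ U.toLinearEquiv.toLinearMap ∘ₗ
        lp.lsingle (𝕜 := ℂ) (E := fun _ : ℕ => W) 2 0
      norm_map' := hnorm }
  have hτ₀ : ∀ η, U (lp.single 2 0 η) = lp.single 2 0 (τ₀ η) := h₀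
  have hsurj : Function.Surjective τ₀ := fun ξ => by
    refine ⟨U.symm (lp.single 2 0 ξ) 0, ?_⟩
    have h := hτ₀ (U.symm (lp.single 2 0 ξ) 0)
    rw [← map_single_zero_of_intertwines hS' hS (symm_apply_shift_of_intertwines hU) ξ,
      U.apply_symm_apply] at h
    simpa using (congrArg (· 0) h).symm
  let τ := LinearIsometryEquiv.ofSurjective τ₀ hsurj
  exact ⟨τ, apply_eq_of_map_single τ (map_single_of_map_single_zero hS hS' hU hτ₀)⟩

end Intertwining

namespace LinearIsometry

variable {E F G : Type*} [NormedAddCommGroup E] [InnerProductSpace ℂ E]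
  [NormedAddCommGroup F] [InnerProductSpace ℂ F] [NormedAddCommGroup G] [InnerProductSpace ℂ G]

theorem exists_equiv_comp_eq_of_range_eq (Θ : E →ₗᵢ[ℂ] G) (Θ' : F →ₗᵢ[ℂ] G)
    (h : Set.range Θ = Set.range Θ') : ∃ U : E ≃ₗᵢ[ℂ] F, ∀ g, Θ' (U g) = Θ g := by
  have hrange : LinearMap.range Θ.toLinearMap = LinearMap.range Θ'.toLinearMap :=
    SetLike.coe_injective h
  let U := Θ.equivRange.trans ((LinearIsometryEquiv.ofEq _ _ hrange).trans Θ'.equivRange.symm)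
  exact ⟨U, fun g => congrArg Subtype.val (Θ'.equivRange.apply_symm_apply _)⟩

theorem apply_adjoint_apply_of_mem_range [CompleteSpace E] [CompleteSpace F] (Θ : E →ₗᵢ[ℂ] F)
    {y : F} (hy : y ∈ Set.range Θ) : Θ (adjoint Θ.toContinuousLinearMap y) = y := by
  obtain ⟨x, rfl⟩ := hy
  have h := (isometry_iff_adjoint_comp_self Θ.toContinuousLinearMap).1 Θ.isometry
  exact congrArg Θ (DFunLike.congr_fun h x)

end LinearIsometry

theorem exists_diagonal_unitary_of_range_eq {ι H W W' : Type*}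
    [NormedAddCommGroup H] [InnerProductSpace ℂ H] [CompleteSpace H]
    [NormedAddCommGroup W] [InnerProductSpace ℂ W] [CompleteSpace W]
    [NormedAddCommGroup W'] [InnerProductSpace ℂ W']
    {Mz : H →L[ℂ] H} {Mk : ι → H →L[ℂ] H}
    {SW : lp (fun _ : ℕ => W) 2 →L[ℂ] lp (fun _ : ℕ => W) 2}
    {SW' : lp (fun _ : ℕ => W') 2 →L[ℂ] lp (fun _ : ℕ => W') 2}
    {Θ : lp (fun _ : ℕ => W) 2 →ₗᵢ[ℂ] H} {Θ' : lp (fun _ : ℕ => W') 2 →ₗᵢ[ℂ] H}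
    {T : ι → lp (fun _ : ℕ => W) 2 →L[ℂ] lp (fun _ : ℕ => W) 2}
    {T' : ι → lp (fun _ : ℕ => W') 2 →L[ℂ] lp (fun _ : ℕ => W') 2}
    (hr : Set.range Θ = Set.range Θ') (hSW : IsUnilateralShift SW)
    (hSW' : IsUnilateralShift SW') (hΘS : ∀ g, Θ (SW g) = Mz (Θ g))
    (hΘ'S : ∀ g, Θ' (SW' g) = Mz (Θ' g))
    (hT : ∀ i g, T i g = adjoint Θ.toContinuousLinearMap (Mk i (Θ g)))
    (hΘ'T : ∀ i g, Θ' (T' i g) = Mk i (Θ' g)) :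
    ∃ (τ : W ≃ₗᵢ[ℂ] W') (U : lp (fun _ : ℕ => W) 2 ≃ₗᵢ[ℂ] lp (fun _ : ℕ => W') 2),
      (∀ g m, U g m = τ (g m)) ∧ (∀ g, Θ g = Θ' (U g)) ∧
      (∀ i g, U (T i g) = T' i (U g)) := by
  obtain ⟨U, hU⟩ := Θ.exists_equiv_comp_eq_of_range_eq Θ' hr
  have hUS : ∀ g, U (SW g) = SW' (U g) := fun g => Θ'.injective <| by rw [hU, hΘ'S, hU, hΘS]
  obtain ⟨τ, hτ⟩ := exists_diagonal_of_intertwines hSW hSW' hUS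
  have hΘT : ∀ i g, Θ (T i g) = Mk i (Θ g) := fun i g => by
    have hmem : Mk i (Θ g) ∈ Set.range Θ := by
      rw [← hU, ← hΘ'T, hr]
      exact Set.mem_range_self _
    rw [hT, Θ.apply_adjoint_apply_of_mem_range hmem]
  refine ⟨τ, U, hτ, fun g => (hU g).symm, fun i g => Θ'.injective ?_⟩
  rw [hU, hΘT, hΘ'T, hU]

theorem statement12_general (n : ℕ)
    (E : Type u) [NormedAddCommGroup E] [InnerProductSpace ℂ E] [CompleteSpace E]
    (Mz : ModelSpace n E →L[ℂ] ModelSpace n E)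
    (Mk : Fin n → (ModelSpace n E →L[ℂ] ModelSpace n E))
    (S : Submodule ℂ (ModelSpace n E))
    (W : Submodule ℂ (ModelSpace n E)) [CompleteSpace ↥W]
    (SW : lp (fun _ : ℕ => ↥W) 2 →L[ℂ] lp (fun _ : ℕ => ↥W) 2) (hSW : IsUnilateralShift SW)
    (Θ : lp (fun _ : ℕ => ↥W) 2 →ₗᵢ[ℂ] ModelSpace n E)
    (hΘr : Set.range Θ = (S : Set (ModelSpace n E)))
    (hΘS : ∀ g, Θ (SW g) = Mz (Θ g))
    (T : Fin n → (lp (fun _ : ℕ => ↥W) 2 →L[ℂ] lp (fun _ : ℕ => ↥W) 2))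
    (hT : ∀ (i : Fin n) g,
      T i g = ContinuousLinearMap.adjoint Θ.toContinuousLinearMap (Mk i (Θ g)))
    (W' : Type v) [NormedAddCommGroup W'] [InnerProductSpace ℂ W']
    (SW' : lp (fun _ : ℕ => W') 2 →L[ℂ] lp (fun _ : ℕ => W') 2) (hSW' : IsUnilateralShift SW')
    (Θ' : lp (fun _ : ℕ => W') 2 →ₗᵢ[ℂ] ModelSpace n E)
    (hΘ'r : Set.range Θ' = (S : Set (ModelSpace n E)))
    (hΘ'S : ∀ g, Θ' (SW' g) = Mz (Θ' g))
    (T' : Fin n → (lp (fun _ : ℕ => W') 2 →L[ℂ] lp (fun _ : ℕ => W') 2))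
    (hΘ'T : ∀ (i : Fin n) g, Θ' (T' i g) = Mk i (Θ' g)) :
    ∃ (τ : ↥W ≃ₗᵢ[ℂ] W') (Uτ : lp (fun _ : ℕ => ↥W) 2 ≃ₗᵢ[ℂ] lp (fun _ : ℕ => W') 2),
      (∀ (g : lp (fun _ : ℕ => ↥W) 2) (m : ℕ), (Uτ g) m = τ (g m)) ∧
      (∀ g, Θ g = Θ' (Uτ g)) ∧
      (∀ (i : Fin n) g, Uτ (T i g) = T' i (Uτ g)) :=
  exists_diagonal_unitary_of_range_eq (hΘr.trans hΘ'r.symm) hSW hSW' hΘS hΘ'S hT hΘ'T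

set_option maxHeartbeats 1000000 in
/-- Uniqueness of the Beurling–Lax–Halmos data of an invariant subspace
`S ⊆ ℓ²(ℕ, ℓ²(ℕⁿ, E))`: if `Θ̃ : ℓ²(ℕ, W̃) → H` is another shift-intertwining isometry with
range `S` and `Θ̃ T̃ᵢ = M_{κᵢ} Θ̃` for shifts `T̃ᵢ` commuting with `S_{W̃}`, then there is a
unitary `τ : W → W̃` with `Θ = Θ̃ (I ⊗ τ)` and `(I ⊗ τ) Tᵢ = T̃ᵢ (I ⊗ τ)`. -/
theorem statement12 (n : ℕ) (hn : 1 ≤ n)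
    (E : Type u) [NormedAddCommGroup E] [InnerProductSpace ℂ E] [CompleteSpace E]
    (Mz : ModelSpace n E →L[ℂ] ModelSpace n E) (hMz : IsUnilateralShift Mz)
    (Mk : Fin n → (ModelSpace n E →L[ℂ] ModelSpace n E)) (hMk : ∀ i, IsKappa i (Mk i))
    (S : Submodule ℂ (ModelSpace n E)) (hScl : IsClosed (S : Set (ModelSpace n E)))
    (hSz : ∀ f ∈ S, Mz f ∈ S) (hSk : ∀ i, ∀ f ∈ S, Mk i f ∈ S)
    (W : Submodule ℂ (ModelSpace n E)) (hW : W = S ⊓ (S.map Mz.toLinearMap)ᗮ) [CompleteSpace ↥W]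
    (SW : lp (fun _ : ℕ => ↥W) 2 →L[ℂ] lp (fun _ : ℕ => ↥W) 2) (hSW : IsUnilateralShift SW)
    (Θ : lp (fun _ : ℕ => ↥W) 2 →ₗᵢ[ℂ] ModelSpace n E)
    (hΘ : ∀ (m : ℕ) (η : ↥W), Θ (lp.single 2 m η) = (Mz ^ m) (η : ModelSpace n E))
    (hΘr : Set.range Θ = (S : Set (ModelSpace n E)))
    (hΘS : ∀ g, Θ (SW g) = Mz (Θ g))
    (T : Fin n → (lp (fun _ : ℕ => ↥W) 2 →L[ℂ] lp (fun _ : ℕ => ↥W) 2))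
    (hT : ∀ (i : Fin n) g,
      T i g = ContinuousLinearMap.adjoint Θ.toContinuousLinearMap (Mk i (Θ g)))
    (W' : Type v) [NormedAddCommGroup W'] [InnerProductSpace ℂ W'] [CompleteSpace W']
    (SW' : lp (fun _ : ℕ => W') 2 →L[ℂ] lp (fun _ : ℕ => W') 2) (hSW' : IsUnilateralShift SW')
    (Θ' : lp (fun _ : ℕ => W') 2 →ₗᵢ[ℂ] ModelSpace n E)
    (hΘ'r : Set.range Θ' = (S : Set (ModelSpace n E)))
    (hΘ'S : ∀ g, Θ' (SW' g) = Mz (Θ' g))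
    (T' : Fin n → (lp (fun _ : ℕ => W') 2 →L[ℂ] lp (fun _ : ℕ => W') 2))
    (hT'shift : ∀ i, IsShiftOp (T' i))
    (hT'c : ∀ i, T' i ∘L SW' = SW' ∘L T' i)
    (hΘ'T : ∀ (i : Fin n) g, Θ' (T' i g) = Mk i (Θ' g)) :
    ∃ (τ : ↥W ≃ₗᵢ[ℂ] W') (Uτ : lp (fun _ : ℕ => ↥W) 2 ≃ₗᵢ[ℂ] lp (fun _ : ℕ => W') 2),
      (∀ (g : lp (fun _ : ℕ => ↥W) 2) (m : ℕ), (Uτ g) m = τ (g m)) ∧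
      (∀ g, Θ g = Θ' (Uτ g)) ∧
      (∀ (i : Fin n) g, Uτ (T i g) = T' i (Uτ g)) :=
  statement12_general n E Mz Mk S W SW hSW Θ hΘr hΘS T hT W' SW' hSW' Θ' hΘ'r hΘ'S T' hΘ'T
end
end

section
/- Let E be a complex Hilbert space and let S ⊆ ℓ²(ℕ, E) be a nonzero closed subspace invariant under the unilateral shift S_E. Let W = S ⊖ S_E S. Then the map Π : ℓ²(ℕ, W) → ℓ²(ℕ, E) determined by Π(e_m ⊗ η) = S_Eᵐ η for m ∈ ℕ and η ∈ W is a well-defined isometry satisfying Π S_W = S_E Π and range Π = S, where S_W is the unilateral shift on ℓ²(ℕ, W). -/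
noncomputable section

open Filter Topology MeasureTheory ContinuousLinearMap

universe u v

/-!
Wold decomposition. As `S_E` is an isometry and `S` is closed and invariant, `S = S_E S ⊕ W`, so the
spaces `S_Eᵐ W` are mutually orthogonal and `Π` is the isometry of this orthogonal family; its
range is the closed span of the `S_Eᵐ W`, which lies in `S`. A vector of `S` orthogonal to every
`S_Eᵐ W` lies in `S_Eᵐ S` for all `m`, so its first `m` coordinates vanish for all `m`: the range
is all of `S`. The intertwining `Π S_W = S_E Π` only needs checking on the vectors `e_m ⊗ η`.
-/

open scoped InnerProductSpace ENNReal

theorem Submodule.inf_orthogonal_inf_orthogonal_le {𝕜 H : Type*} [RCLike 𝕜] [NormedAddCommGroup H]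
    [InnerProductSpace 𝕜 H] {K S : Submodule 𝕜 H} [K.HasOrthogonalProjection] (hKS : K ≤ S) :
    S ⊓ (S ⊓ Kᗮ)ᗮ ≤ K := by
  rintro g ⟨hgS, hg⟩
  obtain ⟨k, hk, w, hw, rfl⟩ := K.exists_add_mem_mem_orthogonal g
  have hwS : w ∈ S := by simpa using S.sub_mem hgS (hKS hk)
  have hww : ⟪w, k + w⟫_𝕜 = 0 :=
    Submodule.inner_right_of_mem_orthogonal (show w ∈ S ⊓ Kᗮ from ⟨hwS, hw⟩) hg
  rw [inner_add_right, Submodule.inner_left_of_mem_orthogonal hk hw, zero_add] at hww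
  simpa [inner_self_eq_zero.mp hww] using hk

section Wandering

variable {𝕜 H : Type*} [RCLike 𝕜] [NormedAddCommGroup H] [InnerProductSpace 𝕜 H]
  {V : H →L[𝕜] H} {S : Submodule 𝕜 H}

def wanderingSubspace (V : H →L[𝕜] H) (S : Submodule 𝕜 H) : Submodule 𝕜 H :=
  S ⊓ (S.map (V : H →ₗ[𝕜] H))ᗮ

theorem wanderingSubspace_le : wanderingSubspace V S ≤ S := inf_le_left

theorem isClosed_wanderingSubspace (hS : IsClosed (S : Set H)) :
    IsClosed (wanderingSubspace V S : Set H) :=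
  hS.inter (Submodule.isClosed_orthogonal _)

theorem pow_apply_mem (hSV : ∀ f ∈ S, V f ∈ S) (m : ℕ) {f : H} (hf : f ∈ S) :
    (V ^ m) f ∈ S := by
  induction m with
  | zero => simpa using hf
  | succ m ih => rw [pow_succ', mul_apply_eq_comp]; exact hSV _ ih

theorem norm_pow_apply_of_norm_map (hV : ∀ f, ‖V f‖ = ‖f‖) (m : ℕ) (f : H) :
    ‖(V ^ m) f‖ = ‖f‖ := by
  induction m with
  | zero => simp
  | succ m ih => rw [pow_succ', mul_apply_eq_comp, hV, ih]

theorem inner_pow_apply_pow_apply_s17 (hV : ∀ f, ‖V f‖ = ‖f‖) (m : ℕ) (f g : H) :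
    ⟪(V ^ m) f, (V ^ m) g⟫_𝕜 = ⟪f, g⟫_𝕜 :=
  (LinearMap.norm_map_iff_inner_map_map (V ^ m)).mp (norm_pow_apply_of_norm_map hV m) f g

def wanderingIsometry (hV : ∀ f, ‖V f‖ = ‖f‖) (S : Submodule 𝕜 H) (m : ℕ) :
    wanderingSubspace V S →ₗᵢ[𝕜] H :=
  ⟨(V ^ m : H →L[𝕜] H).toLinearMap ∘ₗ (wanderingSubspace V S).subtype,
    fun η => norm_pow_apply_of_norm_map hV m η⟩

@[simp]
theorem wanderingIsometry_apply (hV : ∀ f, ‖V f‖ = ‖f‖) (m : ℕ) (η : wanderingSubspace V S) :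
    wanderingIsometry hV S m η = (V ^ m) η :=
  rfl

theorem inner_pow_apply_wanderingSubspace_of_lt (hV : ∀ f, ‖V f‖ = ‖f‖)
    (hSV : ∀ f ∈ S, V f ∈ S) {m k : ℕ} (hmk : m < k) {η ξ : H}
    (hη : η ∈ wanderingSubspace V S) (hξ : ξ ∈ wanderingSubspace V S) :
    ⟪(V ^ m) η, (V ^ k) ξ⟫_𝕜 = 0 := by
  obtain ⟨d, rfl⟩ := Nat.exists_eq_add_of_lt hmk
  have hmem : (V ^ (d + 1)) ξ ∈ S.map (V : H →ₗ[𝕜] H) := by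
    rw [pow_succ', mul_apply_eq_comp]
    exact Submodule.mem_map_of_mem (pow_apply_mem hSV d (wanderingSubspace_le hξ))
  rw [add_assoc, pow_add, mul_apply_eq_comp, inner_pow_apply_pow_apply_s17 hV]
  exact Submodule.inner_left_of_mem_orthogonal hmem hη.2

theorem orthogonalFamily_wanderingIsometry (hV : ∀ f, ‖V f‖ = ‖f‖) (hSV : ∀ f ∈ S, V f ∈ S) :
    OrthogonalFamily 𝕜 (fun _ : ℕ => wanderingSubspace V S) (wanderingIsometry hV S) := by
  intro m k hmk η ξ
  rcases hmk.lt_or_gt with h | h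
  · exact inner_pow_apply_wanderingSubspace_of_lt hV hSV h η.2 ξ.2
  · exact inner_eq_zero_symm.mp (inner_pow_apply_wanderingSubspace_of_lt hV hSV h ξ.2 η.2)

variable [CompleteSpace H]

theorem mem_map_of_mem_orthogonal_wanderingSubspace (hV : ∀ f, ‖V f‖ = ‖f‖)
    (hS : IsClosed (S : Set H)) (hSV : ∀ f ∈ S, V f ∈ S) {g : H} (hgS : g ∈ S)
    (hg : g ∈ (wanderingSubspace V S)ᗮ) :
    g ∈ S.map (V : H →ₗ[𝕜] H) := by
  have hVS : IsClosed (S.map (V : H →ₗ[𝕜] H) : Set H) := by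
    rw [Submodule.map_coe]
    exact (AddMonoidHomClass.isometry_of_norm V hV).isClosedEmbedding.isClosedMap _ hS
  have : CompleteSpace (S.map (V : H →ₗ[𝕜] H)) := hVS.completeSpace_coe
  exact Submodule.inf_orthogonal_inf_orthogonal_le (by rintro _ ⟨f, hf, rfl⟩; exact hSV f hf)
    ⟨hgS, hg⟩

theorem exists_pow_apply_eq_of_orthogonal (hV : ∀ f, ‖V f‖ = ‖f‖)
    (hS : IsClosed (S : Set H)) (hSV : ∀ f ∈ S, V f ∈ S) (m : ℕ) {g : H} (hgS : g ∈ S)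
    (hg : ∀ k, ∀ η ∈ wanderingSubspace V S, ⟪(V ^ k) η, g⟫_𝕜 = 0) :
    ∃ f ∈ S, (V ^ m) f = g := by
  induction m generalizing g with
  | zero => exact ⟨g, hgS, rfl⟩
  | succ m ih =>
    obtain ⟨f, hfS, rfl⟩ := mem_map_of_mem_orthogonal_wanderingSubspace hV hS hSV hgS
      fun η hη => by simpa using hg 0 η hη
    have hf : ∀ k, ∀ η ∈ wanderingSubspace V S, ⟪(V ^ k) η, f⟫_𝕜 = 0 := fun k η hη => by
      rw [← inner_pow_apply_pow_apply_s17 hV 1, ← mul_apply_eq_comp, ← pow_add, pow_one, add_comm]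
      exact hg (k + 1) η hη
    obtain ⟨f', hf'S, rfl⟩ := ih hfS hf
    exact ⟨f', hf'S, by rw [pow_succ', mul_apply_eq_comp]; rfl⟩

theorem range_linearIsometry_wanderingIsometry (hV : ∀ f, ‖V f‖ = ‖f‖)
    (hS : IsClosed (S : Set H))
    (hSV : ∀ f ∈ S, V f ∈ S) (hpure : ∀ g, (∀ m : ℕ, g ∈ Set.range (V ^ m)) → g = 0) :
    LinearMap.range (orthogonalFamily_wanderingIsometry hV hSV).linearIsometry.toLinearMap = S := by
  have : CompleteSpace (wanderingSubspace V S) := (isClosed_wanderingSubspace hS).completeSpace_coe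
  set Φ := (orthogonalFamily_wanderingIsometry hV hSV).linearIsometry
  have hRS : LinearMap.range Φ.toLinearMap ≤ S := by
    rw [OrthogonalFamily.range_linearIsometry]
    refine Submodule.topologicalClosure_minimal _ (iSup_le fun m => ?_) hS
    rintro _ ⟨η, rfl⟩
    exact pow_apply_mem hSV m (wanderingSubspace_le η.2)
  have horth : (LinearMap.range Φ.toLinearMap)ᗮ ⊓ S = ⊥ := by
    refine eq_bot_iff.2 fun z hzRS => hpure z fun m => ?_
    have hz : ∀ k, ∀ η ∈ wanderingSubspace V S, ⟪(V ^ k) η, z⟫_𝕜 = 0 := fun k η hη =>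
      Submodule.inner_right_of_mem_orthogonal (K := LinearMap.range Φ.toLinearMap)
        ⟨lp.single 2 k ⟨η, hη⟩, OrthogonalFamily.linearIsometry_apply_single _ _⟩ hzRS.1
    obtain ⟨f, -, hf⟩ := exists_pow_apply_eq_of_orthogonal hV hS hSV m hzRS.2 hz
    exact ⟨f, hf⟩
  have : (LinearMap.range Φ.toLinearMap).HasOrthogonalProjection := by
    rw [OrthogonalFamily.range_linearIsometry]
    infer_instance
  simpa [horth] using Submodule.sup_orthogonal_inf_of_hasOrthogonalProjection hRS

end Wandering

namespace IsUnilateralShift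

variable {W : Type*} [NormedAddCommGroup W] [InnerProductSpace ℂ W]
  {T : lp (fun _ : ℕ => W) 2 →L[ℂ] lp (fun _ : ℕ => W) 2}

theorem norm_map (hT : IsUnilateralShift T) (f : lp (fun _ : ℕ => W) 2) : ‖T f‖ = ‖f‖ := by
  have hp : 0 < (2 : ℝ≥0∞).toReal := by norm_num
  have hTf : HasSum (fun n => ‖T f n‖ ^ (2 : ℝ≥0∞).toReal) (‖f‖ ^ (2 : ℝ≥0∞).toReal) := by
    rw [← hasSum_nat_add_iff' 1]
    simpa [(hT f).1, (hT f).2] using lp.hasSum_norm hp f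
  exact Real.rpow_left_injOn hp.ne' (norm_nonneg _) (norm_nonneg _)
    ((lp.hasSum_norm hp (T f)).unique hTf)

theorem pow_apply (hT : IsUnilateralShift T) (m : ℕ) (f : lp (fun _ : ℕ => W) 2) (k : ℕ) :
    (T ^ m) f k = if m ≤ k then f (k - m) else 0 := by
  induction m generalizing k with
  | zero => simp
  | succ m ih =>
    rw [pow_succ', mul_apply_eq_comp]
    cases k with
    | zero => rw [(hT _).1]; simp
    | succ k => rw [(hT _).2, ih]; simp

theorem eq_zero_of_forall_mem_range_pow (hT : IsUnilateralShift T) {g : lp (fun _ : ℕ => W) 2}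
    (hg : ∀ m : ℕ, g ∈ Set.range (T ^ m)) : g = 0 := by
  ext k
  obtain ⟨f, rfl⟩ := hg (k + 1)
  simpa using hT.pow_apply (k + 1) f k

theorem map_single (hT : IsUnilateralShift T) (m : ℕ) (η : W) :
    T (lp.single 2 m η) = lp.single 2 (m + 1) η := by
  ext k
  cases k with
  | zero => simp [(hT _).1, lp.single_apply]
  | succ k => simp [(hT _).2, lp.single_apply, Pi.single_apply]

end IsUnilateralShift

theorem IsUnilateralShift.linearIsometry_wanderingIsometry_apply_shift {H : Type*}
    [NormedAddCommGroup H] [InnerProductSpace ℂ H] [CompleteSpace H] {V : H →L[ℂ] H}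
    (hV : ∀ f, ‖V f‖ = ‖f‖) {S : Submodule ℂ H} (hSV : ∀ f ∈ S, V f ∈ S)
    {T : lp (fun _ : ℕ => wanderingSubspace V S) 2 →L[ℂ] lp (fun _ : ℕ => wanderingSubspace V S) 2}
    (hT : IsUnilateralShift T) (g : lp (fun _ : ℕ => wanderingSubspace V S) 2) :
    (orthogonalFamily_wanderingIsometry hV hSV).linearIsometry (T g) =
      V ((orthogonalFamily_wanderingIsometry hV hSV).linearIsometry g) := by
  set Φ := (orthogonalFamily_wanderingIsometry hV hSV).linearIsometry.toContinuousLinearMap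
  have : Φ ∘L T = V ∘L Φ := lp.ext_continuousLinearMap ENNReal.ofNat_ne_top fun m => by
    ext η
    simp [Φ, hT.map_single, pow_succ', mul_apply_eq_comp]
  exact congr($this g)

theorem statement17_general (E : Type u) [NormedAddCommGroup E] [InnerProductSpace ℂ E] [CompleteSpace E]
    (SE : lp (fun _ : ℕ => E) 2 →L[ℂ] lp (fun _ : ℕ => E) 2) (hSE : IsUnilateralShift SE)
    (S : Submodule ℂ (lp (fun _ : ℕ => E) 2))
    (hScl : IsClosed (S : Set (lp (fun _ : ℕ => E) 2)))
    (hSV : ∀ f ∈ S, SE f ∈ S)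
    (W : Submodule ℂ (lp (fun _ : ℕ => E) 2)) (hW : W = S ⊓ (S.map (SE : lp (fun _ : ℕ => E) 2 →ₗ[ℂ] lp (fun _ : ℕ => E) 2))ᗮ)
    (SW : lp (fun _ : ℕ => ↥W) 2 →L[ℂ] lp (fun _ : ℕ => ↥W) 2)
    (hSW : IsUnilateralShift SW) :
    ∃ Θ : lp (fun _ : ℕ => ↥W) 2 →ₗᵢ[ℂ] lp (fun _ : ℕ => E) 2,
      (∀ (m : ℕ) (η : ↥W), Θ (lp.single 2 m η) = (SE ^ m) (η : lp (fun _ : ℕ => E) 2)) ∧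
      (∀ g, Θ (SW g) = SE (Θ g)) ∧
      Set.range Θ = (S : Set (lp (fun _ : ℕ => E) 2)) := by
  obtain rfl : W = wanderingSubspace SE S := hW
  have hV := orthogonalFamily_wanderingIsometry hSE.norm_map hSV
  have hrange := range_linearIsometry_wanderingIsometry hSE.norm_map hScl hSV
    fun _ => hSE.eq_zero_of_forall_mem_range_pow
  refine ⟨hV.linearIsometry, fun _ η => hV.linearIsometry_apply_single η,
    hSW.linearIsometry_wanderingIsometry_apply_shift _ hSV, ?_⟩
  rw [← LinearIsometry.coe_toLinearMap, ← LinearMap.coe_range, hrange]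

/-- (Beurling–Lax–Halmos, ℓ²-model.) If `S ⊆ ℓ²(ℕ, E)` is a nonzero closed
subspace invariant under the unilateral shift `S_E` and `W = S ⊖ S_E S`, then the map determined
by `Π(e_m ⊗ η) = S_Eᵐ η` is a well-defined isometry `ℓ²(ℕ, W) → ℓ²(ℕ, E)` satisfying
`Π S_W = S_E Π` and `range Π = S`. -/
theorem statement17 (E : Type u) [NormedAddCommGroup E] [InnerProductSpace ℂ E] [CompleteSpace E]
    (SE : lp (fun _ : ℕ => E) 2 →L[ℂ] lp (fun _ : ℕ => E) 2) (hSE : IsUnilateralShift SE)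
    (S : Submodule ℂ (lp (fun _ : ℕ => E) 2)) (hSne : S ≠ ⊥)
    (hScl : IsClosed (S : Set (lp (fun _ : ℕ => E) 2)))
    (hSV : ∀ f ∈ S, SE f ∈ S)
    (W : Submodule ℂ (lp (fun _ : ℕ => E) 2)) (hW : W = S ⊓ (S.map (SE : lp (fun _ : ℕ => E) 2 →ₗ[ℂ] lp (fun _ : ℕ => E) 2))ᗮ)
    (SW : lp (fun _ : ℕ => ↥W) 2 →L[ℂ] lp (fun _ : ℕ => ↥W) 2)
    (hSW : IsUnilateralShift SW) :
    ∃ Θ : lp (fun _ : ℕ => ↥W) 2 →ₗᵢ[ℂ] lp (fun _ : ℕ => E) 2,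
      (∀ (m : ℕ) (η : ↥W), Θ (lp.single 2 m η) = (SE ^ m) (η : lp (fun _ : ℕ => E) 2)) ∧
      (∀ g, Θ (SW g) = SE (Θ g)) ∧
      Set.range Θ = (S : Set (lp (fun _ : ℕ => E) 2)) :=
  statement17_general E SE hSE S hScl hSV W hW SW hSW
end
end
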